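/- arXiv:cs/0701017 — 9 statements merged into one kernel-verified Lean document; each statement's English description precedes it below -/
import Mathlib

section
/- Let f satisfy the efficiency-function hypotheses and let Γ > 0. Then the equation f'(γ)·γ·(1 − γ/Γ) = f(γ) has exactly one solution γ* in the open interval (0, Γ), and there is no solution with γ ≥ Γ. -/
open Filter Set

set_option maxHeartbeats 1000000

/-- Let `f` satisfy the efficiency-function hypotheses
(`f` continuously differentiable, `f 0 = 0`, `f' 0 = 0`, `f' > 0` on `(0,∞)`,
`f → 1` at `∞`, `γ ↦ f γ / f' γ` convex and strictly increasing on `(0,∞)`, and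
`limsup_{γ→0⁺} f γ / (γ f' γ) < 1`) and let `Γ > 0`.  Then the equation
`f'(γ)·γ·(1 − γ/Γ) = f(γ)` has exactly one solution `γ*` in the open interval `(0, Γ)`,
and there is no solution with `γ ≥ Γ`. -/
theorem unique_utility_maximizing_sinr
    (f : ℝ → ℝ)
    (hf : ContDiff ℝ 1 f)
    (hf0 : f 0 = 0)
    (hf'0 : deriv f 0 = 0)
    (hf'pos : ∀ γ : ℝ, 0 < γ → 0 < deriv f γ)
    (hflim : Tendsto f atTop (nhds 1))
    (hconv : ConvexOn ℝ (Set.Ioi 0) (fun γ => f γ / deriv f γ))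
    (hmono : StrictMonoOn (fun γ => f γ / deriv f γ) (Set.Ioi 0))
    (hlimsup : Filter.limsup (fun γ => f γ / (γ * deriv f γ))
        (nhdsWithin 0 (Set.Ioi 0)) < 1)
    (Γ : ℝ) (hΓ : 0 < Γ) :
    (∃! γs : ℝ, γs ∈ Set.Ioo 0 Γ ∧ deriv f γs * γs * (1 - γs / Γ) = f γs) ∧
    (∀ γ : ℝ, Γ ≤ γ → deriv f γ * γ * (1 - γ / Γ) ≠ f γ) := by
  -- Basic facts
  have hfd : Differentiable ℝ f := hf.differentiable one_ne_zero
  have hfc : Continuous f := hfd.continuous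
  have hf'c : Continuous (deriv f) := hf.continuous_deriv le_rfl
  have hmonoF : StrictMonoOn f (Set.Ici 0) := by
    apply strictMonoOn_of_deriv_pos (convex_Ici 0) hfc.continuousOn
    intro x hx
    rw [interior_Ici] at hx
    exact hf'pos x hx
  have hfpos : ∀ γ : ℝ, 0 < γ → 0 < f γ := by
    intro γ hγ
    have := hmonoF Set.self_mem_Ici (Set.mem_Ici.mpr hγ.le) hγ
    simpa [hf0] using this
  set g : ℝ → ℝ := fun γ => f γ / deriv f γ with hgdef
  have hgpos : ∀ γ : ℝ, 0 < γ → 0 < g γ := fun γ hγ =>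
    div_pos (hfpos γ hγ) (hf'pos γ hγ)
  have hgmono : ∀ x y : ℝ, 0 < x → x ≤ y → g x ≤ g y := fun x y hx hxy =>
    hmono.monotoneOn (Set.mem_Ioi.mpr hx) (Set.mem_Ioi.mpr (lt_of_lt_of_le hx hxy)) hxy
  -- g gets arbitrarily small near 0
  have hsmall : ∀ ε : ℝ, 0 < ε → ∃ t, 0 < t ∧ g t < ε := by
    intro ε hε
    by_contra hcon
    push_neg at hcon
    set φ : ℝ → ℝ := fun γ => f γ * Real.exp (-γ/ε) with hφdef
    have hφdiff : Differentiable ℝ φ :=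
      hfd.mul (Real.differentiable_exp.comp ((differentiable_id.neg).div_const ε))
    have hkey : ∀ x ∈ interior (Set.Ici (0:ℝ)), deriv φ x ≤ 0 := by
      intro x hx
      rw [interior_Ici] at hx
      have h2 : HasDerivAt (fun γ : ℝ => Real.exp (-γ/ε)) (Real.exp (-x/ε) * (-1/ε)) x := by
        have hlin : HasDerivAt (fun γ : ℝ => -γ/ε) (-1/ε) x := by
          simpa using ((hasDerivAt_id x).neg.div_const ε)
        exact (Real.hasDerivAt_exp (-x/ε)).comp x hlin
      have hd : HasDerivAt φ
          (deriv f x * Real.exp (-x/ε) + f x * (Real.exp (-x/ε) * (-1/ε))) x :=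
        ((hfd x).hasDerivAt).mul h2
      rw [hd.deriv]
      have hge : ε ≤ g x := hcon x hx
      have hf'x := hf'pos x hx
      have hεf : ε * deriv f x ≤ f x := (le_div_iff₀ hf'x).mp hge
      have hE := Real.exp_pos (-x/ε)
      have hrw : deriv f x * Real.exp (-x/ε) + f x * (Real.exp (-x/ε) * (-1/ε))
          = (Real.exp (-x/ε)/ε) * (ε * deriv f x - f x) := by
        field_simp
        ring
      rw [hrw]
      exact mul_nonpos_of_nonneg_of_nonpos (div_nonneg hE.le hε.le) (by linarith)
    have hanti : AntitoneOn φ (Set.Ici 0) :=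
      antitoneOn_of_deriv_nonpos (convex_Ici 0) hφdiff.continuous.continuousOn
        hφdiff.differentiableOn hkey
    have h10 := hanti Set.self_mem_Ici (Set.mem_Ici.mpr zero_le_one) zero_le_one
    have hφ0 : φ 0 = 0 := by simp [hφdef, hf0]
    have hφ1 : f 1 * Real.exp (-1/ε) ≤ 0 := by
      rw [← hφ0]; exact h10
    nlinarith [hfpos 1 one_pos, Real.exp_pos (-1/ε)]
  -- a linear upper bound for g near 0 via convexity
  have hub : ∀ x : ℝ, 0 < x → x < 1 → g x ≤ x / (1-x) * g 1 := by
    intro x hx hx1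
    have hg1 : 0 < g 1 := hgpos 1 one_pos
    refine le_of_forall_pos_le_add ?_
    intro ε hε
    obtain ⟨t0, ht0, hgt0⟩ := hsmall ε hε
    set t := min t0 (x/2) with ht_def
    have ht : 0 < t := lt_min ht0 (by linarith)
    have htx : t < x := lt_of_le_of_lt (min_le_right _ _) (by linarith)
    have hgt : g t < ε := lt_of_le_of_lt (hgmono t t0 ht (min_le_left _ _)) hgt0
    have h1t : 0 < 1 - t := by linarith
    have ha : (0:ℝ) ≤ (1-x)/(1-t) := div_nonneg (by linarith) h1t.le
    have hb : (0:ℝ) ≤ (x-t)/(1-t) := div_nonneg (by linarith) h1t.le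
    have hab : (1-x)/(1-t) + (x-t)/(1-t) = 1 := by field_simp; ring
    have hcomb := hconv.2 (Set.mem_Ioi.mpr ht) (Set.mem_Ioi.mpr one_pos) ha hb hab
    have hxeq : ((1-x)/(1-t)) • t + ((x-t)/(1-t)) • (1:ℝ) = x := by
      simp only [smul_eq_mul]
      field_simp
      ring
    rw [hxeq] at hcomb
    have hbb : (x-t)/(1-t) ≤ x/(1-x) := by
      rw [div_le_div_iff₀ h1t (by linarith)]
      nlinarith [sq_nonneg (x - t), mul_pos ht h1t]
    have ha1 : (1-x)/(1-t) ≤ 1 := by rw [div_le_one h1t]; linarith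
    have hgtn : 0 ≤ g t := (hgpos t ht).le
    calc g x ≤ (1-x)/(1-t) * g t + (x-t)/(1-t) * g 1 := hcomb
      _ ≤ x/(1-x) * g 1 + ε := by
          nlinarith [mul_le_mul_of_nonneg_right hbb hg1.le,
            mul_le_mul_of_nonneg_right ha1 hgtn]
  -- relate u and g
  have hueq : ∀ γ : ℝ, 0 < γ → f γ / (γ * deriv f γ) = g γ / γ := by
    intro γ hγ
    simp only [hgdef]
    rw [div_div, mul_comm]
  -- boundedness of u near 0⁺
  have hev : ∀ᶠ γ in nhdsWithin 0 (Set.Ioi 0),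
      f γ / (γ * deriv f γ) ≤ 2 * g 1 := by
    filter_upwards [Ioo_mem_nhdsGT_of_mem
      (by norm_num : (0:ℝ) ∈ Set.Ico (0:ℝ) (1/2))] with γ hγ
    obtain ⟨hγ0, hγ2⟩ := hγ
    rw [hueq γ hγ0, div_le_iff₀ hγ0]
    have hg1 : 0 < g 1 := hgpos 1 one_pos
    have h1γ : (0:ℝ) < 1 - γ := by linarith
    have hdb : γ/(1-γ) ≤ 2*γ := by rw [div_le_iff₀ h1γ]; nlinarith
    nlinarith [hub γ hγ0 (by linarith), mul_le_mul_of_nonneg_right hdb hg1.le]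
  -- choose c strictly between limsup and 1
  set c : ℝ := (Filter.limsup (fun γ => f γ / (γ * deriv f γ))
      (nhdsWithin 0 (Set.Ioi 0)) + 1)/2 with hcdef
  have hc1 : c < 1 := by rw [hcdef]; linarith
  have hltc : Filter.limsup (fun γ => f γ / (γ * deriv f γ))
      (nhdsWithin 0 (Set.Ioi 0)) < c := by rw [hcdef]; linarith
  have hevc : ∀ᶠ γ in nhdsWithin 0 (Set.Ioi 0), f γ / (γ * deriv f γ) < c :=
    Filter.eventually_lt_of_limsup_lt hltc ⟨2 * g 1, by
      simpa [Filter.eventually_map] using hev⟩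
  obtain ⟨δ, hδmem, hδ⟩ := mem_nhdsGT_iff_exists_Ioo_subset.mp hevc
  rw [Set.mem_Ioi] at hδmem
  -- points with positive h arbitrarily close to 0
  have hpos : ∀ a : ℝ, 0 < a → ∃ p, p ∈ Set.Ioo 0 a ∧ 0 < p * (1 - p/Γ) - g p := by
    intro a ha
    have hΓc : 0 < Γ * (1 - c) := mul_pos hΓ (by linarith)
    set p := min (min δ a) (Γ*(1-c)) / 2 with hp_def
    have hp0 : 0 < p := by
      apply div_pos _ two_pos
      exact lt_min (lt_min hδmem ha) hΓc
    have hpδ : p < δ := by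
      have h1 : min (min δ a) (Γ*(1-c)) ≤ δ := le_trans (min_le_left _ _) (min_le_left _ _)
      rw [hp_def]; linarith
    have hpa : p < a := by
      have h1 : min (min δ a) (Γ*(1-c)) ≤ a := le_trans (min_le_left _ _) (min_le_right _ _)
      rw [hp_def]; linarith
    have hpc : p < Γ*(1-c) := by
      have h1 : min (min δ a) (Γ*(1-c)) ≤ Γ*(1-c) := min_le_right _ _
      rw [hp_def]; linarith
    have hu : f p / (p * deriv f p) < c := hδ ⟨hp0, hpδ⟩
    rw [hueq p hp0] at hu
    have hgp : g p < c * p := by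
      rw [div_lt_iff₀ hp0] at hu; linarith [hu]
    refine ⟨p, ⟨hp0, hpa⟩, ?_⟩
    have hpΓ : p/Γ < 1 - c := by rw [div_lt_iff₀ hΓ]; nlinarith
    nlinarith [mul_pos hp0 (show 0 < 1 - c - p/Γ by linarith)]
  -- continuity of h on positive intervals
  have hgcont : ContinuousOn g (Set.Ioi 0) :=
    hfc.continuousOn.div hf'c.continuousOn (fun x hx => (hf'pos x hx).ne')
  -- existence of a zero in (0, Γ)
  obtain ⟨p0, hp0mem, hp0pos⟩ := hpos Γ hΓ
  have hhcont : ContinuousOn (fun γ => γ * (1 - γ/Γ) - g γ) (Set.Icc p0 Γ) := by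
    apply ContinuousOn.sub
    · exact (continuous_id.mul (continuous_const.sub (continuous_id.div_const Γ))).continuousOn
    · exact hgcont.mono (fun x hx => lt_of_lt_of_le hp0mem.1 hx.1)
  have hΓneg : Γ * (1 - Γ/Γ) - g Γ < 0 := by
    rw [div_self hΓ.ne']
    simpa using hgpos Γ hΓ
  have h0mem : (0:ℝ) ∈ (fun γ => γ * (1 - γ/Γ) - g γ) '' Set.Ioo p0 Γ :=
    intermediate_value_Ioo' hp0mem.2.le hhcont ⟨hΓneg, hp0pos⟩
  obtain ⟨γs, hγsmem, hγszero⟩ := h0mem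
  have hγsIoo : γs ∈ Set.Ioo 0 Γ := ⟨lt_trans hp0mem.1 hγsmem.1, hγsmem.2⟩
  -- equation equivalence
  have heq : ∀ γ : ℝ, 0 < γ →
      (deriv f γ * γ * (1 - γ/Γ) = f γ ↔ γ * (1 - γ/Γ) - g γ = 0) := by
    intro γ hγ
    have h' := (hf'pos γ hγ).ne'
    rw [sub_eq_zero]
    simp only [hgdef]
    rw [eq_div_iff h']
    constructor <;> intro hE <;> linear_combination hE
  -- uniqueness: no two distinct zeros
  have huniq : ∀ a b : ℝ, a ∈ Set.Ioo 0 Γ → b ∈ Set.Ioo 0 Γ → a < b →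
      a * (1 - a/Γ) - g a = 0 → b * (1 - b/Γ) - g b = 0 → False := by
    intro a b ha hb hab hza hzb
    obtain ⟨p, hpmem, hppos⟩ := hpos a ha.1
    have hbp : 0 < b - p := by linarith [hpmem.2]
    set t := (b-a)/(b-p) with ht_def
    set s := 1 - t with hs_def
    have ht' : 0 < t := div_pos (by linarith) hbp
    have ht1 : t ≤ 1 := by rw [ht_def, div_le_one hbp]; linarith [hpmem.2]
    have hs : 0 ≤ s := by rw [hs_def]; linarith
    have haval : a = t*p + s*b := by
      rw [hs_def, ht_def]; field_simp; ring
    have hts : t + s = 1 := by rw [hs_def]; ring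
    have haeq : t • p + s • b = a := by
      simp only [smul_eq_mul]; rw [haval]
    have hconvg := hconv.2 (Set.mem_Ioi.mpr hpmem.1)
      (Set.mem_Ioi.mpr (lt_trans ha.1 hab)) ht'.le hs hts
    rw [haeq] at hconvg
    -- concavity of the quadratic part
    have hquad : t * (p*(1-p/Γ)) + s * (b*(1-b/Γ)) ≤ a * (1-a/Γ) := by
      rw [← sub_nonneg]
      have key : a * (1-a/Γ) - (t * (p*(1-p/Γ)) + s * (b*(1-b/Γ)))
          = t*s*(p-b)^2/Γ := by
        rw [haval, hs_def]
        field_simp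
        ring
      rw [key]
      apply div_nonneg _ hΓ.le
      positivity
    simp only [smul_eq_mul] at hconvg
    have hgb : b*(1-b/Γ) = g b := by linarith
    have hsz : s * (b*(1-b/Γ)) = s * g b := by rw [hgb]
    have hga : g a = a*(1-a/Γ) := by linarith
    have h5 : t * g p < t * (p*(1-p/Γ)) :=
      mul_lt_mul_of_pos_left (by linarith) ht'
    clear_value t s
    linarith [hconvg, hquad, hsz, hga, h5]
  refine ⟨⟨γs, ⟨hγsIoo, (heq γs hγsIoo.1).mpr hγszero⟩, ?_⟩, ?_⟩
  · rintro y ⟨hymem, hyeq⟩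
    have hy0 := (heq y hymem.1).mp hyeq
    rcases lt_trichotomy y γs with h | h | h
    · exact absurd (huniq y γs hymem hγsIoo h hy0 hγszero) not_false
    · exact h
    · exact absurd (huniq γs y hγsIoo hymem h hγszero hy0) not_false
  · intro γ hγΓ hEq
    have hγ0 : 0 < γ := lt_of_lt_of_le hΓ hγΓ
    have h1 : 1 - γ/Γ ≤ 0 := by
      rw [sub_nonpos, le_div_iff₀ hΓ]; nlinarith
    have hle : deriv f γ * γ * (1 - γ/Γ) ≤ 0 :=
      mul_nonpos_of_nonneg_of_nonpos (mul_pos (hf'pos γ hγ0) hγ0).le h1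
    linarith [hfpos γ hγ0, hEq ▸ hle]
end

section
/- Let K ≥ 1 and let I : (0,∞)^K → (0,∞)^K be a standard interference function, i.e. it satisfies monotonicity (p ≥ p' componentwise implies I(p) ≥ I(p') componentwise) and scalability (for every μ > 1 and every p, μ·I(p) > I(μ·p) componentwise). Then I has at most one fixed point in (0,∞)^K. -/
/-!
If `q ≤ μ • p` for fixed points `p, q` and `μ > 1`, monotonicity and scalability give
`q = I q ≤ I (μ • p) < μ • I p = μ • p`, so the bound is nowhere attained. Taking for `μ` the
largest ratio `q k / p k`, which is attained, forces `μ ≤ 1`, i.e. `q ≤ p`; by symmetry `p = q`.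
-/

section

variable {ι : Type*} {I : (ι → ℝ) → ι → ℝ}

theorem fixedPoint_lt_smul_of_le_smul
    (hmono : ∀ p p' : ι → ℝ, (∀ k, 0 < p' k) → (∀ k, 0 < p k) →
      (∀ k, p' k ≤ p k) → ∀ k, I p' k ≤ I p k)
    (hscal : ∀ μ : ℝ, 1 < μ → ∀ p : ι → ℝ, (∀ k, 0 < p k) →
      ∀ k, I (fun j => μ * p j) k < μ * I p k)
    {p q : ι → ℝ} (hp : ∀ k, 0 < p k) (hq : ∀ k, 0 < q k) (hfp : I p = p) (hfq : I q = q)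
    {μ : ℝ} (hμ : 1 < μ) (hqp : ∀ k, q k ≤ μ * p k) (k : ι) : q k < μ * p k :=
  calc q k = I q k := by rw [hfq]
    _ ≤ I (fun j => μ * p j) k :=
      hmono _ q hq (fun j => mul_pos (zero_lt_one.trans hμ) (hp j)) hqp k
    _ < μ * I p k := hscal μ hμ p hp k
    _ = μ * p k := by rw [hfp]

theorem fixedPoint_le_of_fixedPoint [Finite ι]
    (hmono : ∀ p p' : ι → ℝ, (∀ k, 0 < p' k) → (∀ k, 0 < p k) →
      (∀ k, p' k ≤ p k) → ∀ k, I p' k ≤ I p k)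
    (hscal : ∀ μ : ℝ, 1 < μ → ∀ p : ι → ℝ, (∀ k, 0 < p k) →
      ∀ k, I (fun j => μ * p j) k < μ * I p k)
    {p q : ι → ℝ} (hp : ∀ k, 0 < p k) (hq : ∀ k, 0 < q k) (hfp : I p = p) (hfq : I q = q)
    (k : ι) : q k ≤ p k := by
  by_contra! hpq
  obtain ⟨m, hm⟩ : ∃ m, ∀ j, q j / p j ≤ q m / p m :=
    have : Nonempty ι := ⟨k⟩
    Finite.exists_max fun j => q j / p j
  have hμ : 1 < q m / p m := ((one_lt_div (hp k)).2 hpq).trans_le (hm k)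
  have hqp : ∀ j, q j ≤ q m / p m * p j := fun j => (div_le_iff₀ (hp j)).1 (hm j)
  have hlt := fixedPoint_lt_smul_of_le_smul hmono hscal hp hq hfp hfq hμ hqp m
  rw [div_mul_cancel₀ _ (hp m).ne'] at hlt
  exact hlt.false

end

theorem standard_interference_function_unique_fixed_point_general
    (K : ℕ)
    (I : (Fin K → ℝ) → (Fin K → ℝ))
    (hmono : ∀ p p' : Fin K → ℝ, (∀ k, 0 < p' k) → (∀ k, 0 < p k) →
      (∀ k, p' k ≤ p k) → ∀ k, I p' k ≤ I p k)
    (hscal : ∀ μ : ℝ, 1 < μ → ∀ p : Fin K → ℝ, (∀ k, 0 < p k) →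
      ∀ k, I (fun j => μ * p j) k < μ * I p k) :
    ∀ p q : Fin K → ℝ, (∀ k, 0 < p k) → (∀ k, 0 < q k) →
      I p = p → I q = q → p = q := fun _ _ hp hq hfp hfq =>
  funext fun k => le_antisymm (fixedPoint_le_of_fixedPoint hmono hscal hq hp hfq hfp k)
    (fixedPoint_le_of_fixedPoint hmono hscal hp hq hfp hfq k)

/-- Let `K ≥ 1` and let `I : (0,∞)^K → (0,∞)^K` be a standard interference
function (Yates): positive, monotone (componentwise `p' ≤ p` implies `I p' ≤ I p`), and
scalable (for every `μ > 1`, `I (μ • p) < μ • I p` componentwise).  Then `I` has at most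
one fixed point with all components positive. -/
theorem standard_interference_function_unique_fixed_point
    (K : ℕ) (hK : 1 ≤ K)
    (I : (Fin K → ℝ) → (Fin K → ℝ))
    (hpos : ∀ p : Fin K → ℝ, (∀ k, 0 < p k) → ∀ k, 0 < I p k)
    (hmono : ∀ p p' : Fin K → ℝ, (∀ k, 0 < p' k) → (∀ k, 0 < p k) →
      (∀ k, p' k ≤ p k) → ∀ k, I p' k ≤ I p k)
    (hscal : ∀ μ : ℝ, 1 < μ → ∀ p : Fin K → ℝ, (∀ k, 0 < p k) →
      ∀ k, I (fun j => μ * p j) k < μ * I p k) :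
    ∀ p q : Fin K → ℝ, (∀ k, 0 < p k) → (∀ k, 0 < q k) →
      I p = p → I q = q → p = q :=
  standard_interference_function_unique_fixed_point_general K I hmono hscal
end

section
/- Fix K ≥ 2, h_k > 0, Γ_k > 0, h_{kj} ≥ 0 for j ≠ k, σ² > 0, p̄ > 0, and targets γ*_k with 0 < γ*_k < Γ_k, and let r : (0,∞)^K → (0,∞)^K be defined by r_k(p) = min( p̄ , γ*_k·(Σ_{j≠k} h_{kj} p_j + σ²)/( h_k·(1 − γ*_k/Γ_k) ) ). Then r has at most one fixed point in (0,∞)^K (so the Nash equilibrium power vector of the noncooperative power control game is unique). -/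
/-!
Yates' argument for standard interference functions: the best-response map is monotone and
strictly subhomogeneous, `r (t • p) < t • r p` componentwise for `t > 1`, because the cap `p̄` and
the noise `σ²` do not scale with `t`. If `q` and `p` were distinct positive fixed points with,
say, `t = maxₖ qₖ / pₖ > 1`, then at a user `k` attaining the maximum
`qₖ = rₖ q ≤ rₖ (t • p) < t · rₖ p = t · pₖ = qₖ`.
-/

open Finset

section Scalable

variable {ι : Type*} [Fintype ι] {T : (ι → ℝ) → ι → ℝ}

theorem le_of_isFixedPt_of_scalable (hT : Monotone T)
    (hscal : ∀ t > 1, ∀ x k, T (t • x) k < t * T x k) {p q : ι → ℝ} (hp : ∀ k, 0 < p k)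
    (hfp : Function.IsFixedPt T p) (hfq : Function.IsFixedPt T q) : q ≤ p := by
  intro k₁
  by_contra! hk₁
  obtain ⟨k, -, hmax⟩ := exists_max_image univ (fun j => q j / p j) ⟨k₁, mem_univ _⟩
  set t := q k / p k
  have ht : 1 < t := ((one_lt_div (hp k₁)).2 hk₁).trans_le (hmax k₁ (mem_univ _))
  have hqt : q ≤ t • p := fun j => (div_le_iff₀ (hp j)).1 (hmax j (mem_univ _))
  have : q k < q k := calc
    q k = T q k := (congrFun hfq k).symm
    _ ≤ T (t • p) k := hT hqt k
    _ < t * T p k := hscal t ht p k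
    _ = q k := by rw [hfp]; exact div_mul_cancel₀ _ (hp k).ne'
  exact lt_irrefl _ this

theorem eq_of_isFixedPt_of_scalable (hT : Monotone T)
    (hscal : ∀ t > 1, ∀ x k, T (t • x) k < t * T x k) {p q : ι → ℝ} (hp : ∀ k, 0 < p k)
    (hq : ∀ k, 0 < q k) (hfp : Function.IsFixedPt T p) (hfq : Function.IsFixedPt T q) :
    p = q :=
  le_antisymm (le_of_isFixedPt_of_scalable hT hscal hq hfq hfp)
    (le_of_isFixedPt_of_scalable hT hscal hp hfp hfq)

end Scalable

theorem min_mul_add_div_lt_mul_min {c g d s b t : ℝ} (hc : 0 < c) (hg : 0 < g) (hd : 0 < d)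
    (hb : 0 < b) (ht : 1 < t) : min c (g * (t * s + b) / d) < t * min c (g * (s + b) / d) := by
  rw [mul_min_of_nonneg _ _ (by linarith)]
  refine min_lt_min (lt_mul_of_one_lt_left hc ht) ?_
  calc g * (t * s + b) / d < g * (t * s + t * b) / d := by
        gcongr; exact lt_mul_of_one_lt_left hb ht
    _ = t * (g * (s + b) / d) := by ring

theorem mul_one_sub_div_pos {h γ Γ : ℝ} (hh : 0 < h) (hγ : γ < Γ) (hΓ : 0 < Γ) :
    0 < h * (1 - γ / Γ) :=
  mul_pos hh (sub_pos.2 ((div_lt_one hΓ).2 hγ))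

section PowerControl

variable {ι : Type*} [Fintype ι] [DecidableEq ι]

noncomputable def bestResponse (pbar σ2 : ℝ) (h Γ γs : ι → ℝ) (hc : ι → ι → ℝ) (p : ι → ℝ)
    (k : ι) : ℝ :=
  min pbar (γs k * ((∑ j ∈ univ.erase k, hc k j * p j) + σ2) / (h k * (1 - γs k / Γ k)))

variable {pbar σ2 : ℝ} {h Γ γs : ι → ℝ} {hc : ι → ι → ℝ}

theorem monotone_bestResponse (hhc : ∀ k j, j ≠ k → 0 ≤ hc k j) (hγs : ∀ k, 0 ≤ γs k)
    (hden : ∀ k, 0 ≤ h k * (1 - γs k / Γ k)) : Monotone (bestResponse pbar σ2 h Γ γs hc) :=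
  fun x y hxy k => by
    unfold bestResponse
    gcongr with j hj
    · exact hden k
    · exact hγs k
    · exact hhc k j (mem_erase.1 hj).1
    · exact hxy j

theorem bestResponse_smul_lt (hσ2 : 0 < σ2) (hpbar : 0 < pbar) (hγs : ∀ k, 0 < γs k)
    (hden : ∀ k, 0 < h k * (1 - γs k / Γ k)) {t : ℝ} (ht : 1 < t) (x : ι → ℝ) (k : ι) :
    bestResponse pbar σ2 h Γ γs hc (t • x) k < t * bestResponse pbar σ2 h Γ γs hc x k := by
  have hsum : ∑ j ∈ univ.erase k, hc k j * (t • x) j = t * ∑ j ∈ univ.erase k, hc k j * x j := by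
    simp only [Pi.smul_apply, smul_eq_mul, mul_sum, mul_left_comm]
  unfold bestResponse
  rw [hsum]
  exact min_mul_add_div_lt_mul_min hpbar (hγs k) (hden k) hσ2 ht

end PowerControl

theorem nash_equilibrium_unique_general
    (K : ℕ)
    (h Γ : Fin K → ℝ) (hh : ∀ k, 0 < h k) (hΓ : ∀ k, 0 < Γ k)
    (hc : Fin K → Fin K → ℝ) (hhc : ∀ k j, j ≠ k → 0 ≤ hc k j)
    (σ2 : ℝ) (hσ2 : 0 < σ2)
    (pbar : ℝ) (hpbar : 0 < pbar)
    (γs : Fin K → ℝ) (hγs : ∀ k, 0 < γs k ∧ γs k < Γ k)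
    (r : (Fin K → ℝ) → (Fin K → ℝ))
    (hr : ∀ p k, r p k =
      min pbar (γs k * ((∑ j ∈ univ.erase k, hc k j * p j) + σ2) /
        (h k * (1 - γs k / Γ k)))) :
    ∀ p q : Fin K → ℝ, (∀ k, 0 < p k) → (∀ k, 0 < q k) →
      r p = p → r q = q → p = q := by
  obtain rfl : r = bestResponse pbar σ2 h Γ γs hc := funext₂ hr
  have hden k := mul_one_sub_div_pos (hh k) (hγs k).2 (hΓ k)
  intro p q hp hq hfp hfq
  exact eq_of_isFixedPt_of_scalable
    (monotone_bestResponse hhc (fun k => (hγs k).1.le) fun k => (hden k).le)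
    (fun t ht => bestResponse_smul_lt hσ2 hpbar (fun k => (hγs k).1) hden ht) hp hq hfp hfq

/-- Fix `K ≥ 2`, `h k > 0`, `Γ k > 0`, `hc k j ≥ 0` for `j ≠ k`, `σ² > 0`,
`p̄ > 0`, and targets `γs k` with `0 < γs k < Γ k`, and let
`r k p = min (p̄, γs k (∑_{j≠k} hc k j * p j + σ²) / (h k (1 − γs k / Γ k)))` be the
best-response map.  Then `r` has at most one fixed point in `(0,∞)^K`, i.e. the Nash
equilibrium power vector of the noncooperative power control game is unique. -/
theorem nash_equilibrium_unique
    (K : ℕ) (hK : 2 ≤ K)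
    (h Γ : Fin K → ℝ) (hh : ∀ k, 0 < h k) (hΓ : ∀ k, 0 < Γ k)
    (hc : Fin K → Fin K → ℝ) (hhc : ∀ k j, j ≠ k → 0 ≤ hc k j)
    (σ2 : ℝ) (hσ2 : 0 < σ2)
    (pbar : ℝ) (hpbar : 0 < pbar)
    (γs : Fin K → ℝ) (hγs : ∀ k, 0 < γs k ∧ γs k < Γ k)
    (r : (Fin K → ℝ) → (Fin K → ℝ))
    (hr : ∀ p k, r p k =
      min pbar (γs k * ((∑ j ∈ univ.erase k, hc k j * p j) + σ2) /
        (h k * (1 - γs k / Γ k)))) :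
    ∀ p q : Fin K → ℝ, (∀ k, 0 < p k) → (∀ k, 0 < q k) →
      r p = p → r q = q → p = q :=
  nash_equilibrium_unique_general K h Γ hh hΓ hc hhc σ2 hσ2 pbar hpbar γs hγs r hr
end

section
/- Let I : (0,∞)^K → (0,∞)^K be a continuous standard interference function (monotone and scalable), and suppose there exists p⁰ ∈ (0,∞)^K with I(p⁰) ≤ p⁰ componentwise. Then the iterates p^{n+1} = I(p^n) starting from p⁰ form a componentwise nonincreasing sequence that converges to a fixed point of I. -/
open Filter

/-- Let `I` be a continuous standard interference function on `(0,∞)^K`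
(positive, monotone and scalable, continuous up to the boundary of the nonnegative
orthant), and suppose there exists `p⁰ ∈ (0,∞)^K` with `I p⁰ ≤ p⁰` componentwise.
Then the iterates `p^{n+1} = I(p^n)` starting from `p⁰` form a componentwise
nonincreasing sequence that converges to a fixed point of `I`. -/
theorem brpc_iteration_converges
    (K : ℕ) (hK : 1 ≤ K)
    (I : (Fin K → ℝ) → (Fin K → ℝ))
    (hpos : ∀ p : Fin K → ℝ, (∀ k, 0 < p k) → ∀ k, 0 < I p k)
    (hmono : ∀ p p' : Fin K → ℝ, (∀ k, 0 < p' k) → (∀ k, 0 < p k) →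
      (∀ k, p' k ≤ p k) → ∀ k, I p' k ≤ I p k)
    (hscal : ∀ μ : ℝ, 1 < μ → ∀ p : Fin K → ℝ, (∀ k, 0 < p k) →
      ∀ k, I (fun j => μ * p j) k < μ * I p k)
    (hcont : ContinuousOn I {p : Fin K → ℝ | ∀ k, 0 ≤ p k})
    (p0 : Fin K → ℝ) (hp0 : ∀ k, 0 < p0 k)
    (hfeas : ∀ k, I p0 k ≤ p0 k) :
    (∀ n : ℕ, ∀ k, I^[n + 1] p0 k ≤ I^[n] p0 k) ∧
    (∃ q : Fin K → ℝ, Tendsto (fun n : ℕ => I^[n] p0) atTop (nhds q) ∧ I q = q) := by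

  -- positivity of iterates
  have hposn : ∀ n : ℕ, ∀ k, 0 < I^[n] p0 k := by
    intro n
    induction n with
    | zero => exact hp0
    | succ n ih =>
      intro k
      simp [Function.comp, Function.iterate_succ_apply']
      exact hpos _ ih k
  -- monotone decrease
  have hdec : ∀ n : ℕ, ∀ k, I^[n + 1] p0 k ≤ I^[n] p0 k := by
    intro n
    induction n with
    | zero => simpa using hfeas
    | succ n ih =>
      intro k
      rw [Function.iterate_succ_apply' I (n+1), Function.iterate_succ_apply' I n]
      have := hmono _ _ (hposn (n+1)) (hposn n) ih k
      rwa [Function.iterate_succ_apply'] at this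
  refine ⟨hdec, ?_⟩
  have hanti : ∀ k, Antitone fun n : ℕ => I^[n] p0 k := by
    intro k
    exact antitone_nat_of_succ_le fun n => hdec n k
  have hbdd : ∀ k, BddBelow (Set.range fun n : ℕ => I^[n] p0 k) := by
    intro k
    exact ⟨0, by rintro x ⟨n, rfl⟩; exact (hposn n k).le⟩
  set q : Fin K → ℝ := fun k => ⨅ n : ℕ, I^[n] p0 k with hq
  have hqlim : ∀ k, Tendsto (fun n : ℕ => I^[n] p0 k) atTop (nhds (q k)) := by
    intro k
    exact tendsto_atTop_ciInf (hanti k) (hbdd k)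
  have hlim : Tendsto (fun n : ℕ => I^[n] p0) atTop (nhds q) := by
    rw [tendsto_pi_nhds]; exact hqlim
  have hq0 : ∀ k, 0 ≤ q k := by
    intro k
    exact le_ciInf fun n => (hposn n k).le
  -- q is a fixed point by continuity
  have hmem : ∀ n : ℕ, I^[n] p0 ∈ {p : Fin K → ℝ | ∀ k, 0 ≤ p k} :=
    fun n k => (hposn n k).le
  have hlimW : Tendsto (fun n : ℕ => I^[n] p0) atTop
      (nhdsWithin q {p : Fin K → ℝ | ∀ k, 0 ≤ p k}) := by
    rw [tendsto_nhdsWithin_iff]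
    exact ⟨hlim, Eventually.of_forall hmem⟩
  have h1 : Tendsto (fun n : ℕ => I (I^[n] p0)) atTop (nhds (I q)) :=
    (hcont q hq0).tendsto.comp hlimW
  have h2 : Tendsto (fun n : ℕ => I (I^[n] p0)) atTop (nhds q) := by
    have := hlim.comp (tendsto_add_atTop_nat 1)
    simp only [Function.comp_def] at this
    refine this.congr fun n => ?_
    simp [Function.comp, Function.iterate_succ_apply']
  exact ⟨q, hlim, tendsto_nhds_unique h1 h2⟩
end

section
/- Fix K ≥ 2, signal gains h_k > 0, SI ratios Γ_k > 0, cross gains h_{kj} ≥ 0 (j ≠ k), noise σ² > 0, and target SINRs γ*_k > 0. Define SINR_k(p) = h_k p_k / ( h_k p_k/Γ_k + Σ_{j≠k} h_{kj} p_j + σ² ) and ζ_k^{−1} = Σ_{j≠k} h_{kj}/h_j. (i) If q > 0 is such that the powers p_k = q/h_k satisfy SINR_k(p) = γ*_k for every k, then γ*_k·(Γ_k^{−1} + ζ_k^{−1}) < 1 for every k and q = σ²γ*_k / ( 1 − γ*_k·(Γ_k^{−1} + ζ_k^{−1}) ) for every k. (ii) Conversely, if γ*_k·(Γ_k^{−1}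 + ζ_k^{−1}) < 1 for every k and the quantity q_k := σ²γ*_k/( 1 − γ*_k·(Γ_k^{−1} + ζ_k^{−1}) ) is the same for all k, then the powers p_k = q_k/h_k achieve SINR_k(p) = γ*_k for every k. -/
open Finset

/-- Fix `K ≥ 2`, signal gains `h k > 0`, SI ratios `Γ k > 0`, cross gains
`hc k j ≥ 0` (`j ≠ k`), noise `σ² > 0`, target SINRs `γs k > 0`.  With
`SINR k p = h k * p k / (h k * p k / Γ k + ∑_{j≠k} hc k j * p j + σ²)` and
`ζinv k = ∑_{j≠k} hc k j / h j`:
(i) if `q > 0` is such that the powers `p k = q / h k` satisfy `SINR k p = γs k` for all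
`k`, then `γs k * (Γ k⁻¹ + ζinv k) < 1` and `q = σ² γs k / (1 − γs k (Γ k⁻¹ + ζinv k))`
for every `k`;
(ii) conversely, if `γs k * (Γ k⁻¹ + ζinv k) < 1` for every `k` and the quantity
`q k = σ² γs k / (1 − γs k (Γ k⁻¹ + ζinv k))` is the same for all `k`, then the powers
`p k = q k / h k` achieve `SINR k p = γs k` for every `k`. -/
theorem equilibrium_sinr_achievability
    (K : ℕ) (hK : 2 ≤ K)
    (h Γ : Fin K → ℝ) (hh : ∀ k, 0 < h k) (hΓ : ∀ k, 0 < Γ k)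
    (hc : Fin K → Fin K → ℝ) (hhc : ∀ k j, j ≠ k → 0 ≤ hc k j)
    (σ2 : ℝ) (hσ2 : 0 < σ2)
    (γs : Fin K → ℝ) (hγs : ∀ k, 0 < γs k)
    (SINR : (Fin K → ℝ) → Fin K → ℝ)
    (hSINR : ∀ p k, SINR p k =
      h k * p k / (h k * p k / Γ k + (∑ j ∈ univ.erase k, hc k j * p j) + σ2))
    (ζinv : Fin K → ℝ)
    (hζinv : ∀ k, ζinv k = ∑ j ∈ univ.erase k, hc k j / h j) :
    (∀ q : ℝ, 0 < q → (∀ k, SINR (fun j => q / h j) k = γs k) →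
      ∀ k, γs k * ((Γ k)⁻¹ + ζinv k) < 1 ∧
        q = σ2 * γs k / (1 - γs k * ((Γ k)⁻¹ + ζinv k))) ∧
    (∀ qv : Fin K → ℝ,
      (∀ k, γs k * ((Γ k)⁻¹ + ζinv k) < 1) →
      (∀ k, qv k = σ2 * γs k / (1 - γs k * ((Γ k)⁻¹ + ζinv k))) →
      (∀ k j, qv k = qv j) →
      ∀ k, SINR (fun j => qv j / h j) k = γs k) := by
  have hζnn : ∀ k, 0 ≤ ζinv k := by
    intro k
    rw [hζinv]
    exact Finset.sum_nonneg fun j hj =>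
      div_nonneg (hhc k j (Finset.ne_of_mem_erase hj)) (hh j).le
  have key : ∀ (q : ℝ) (k : Fin K),
      SINR (fun j => q / h j) k = q / (q * ((Γ k)⁻¹ + ζinv k) + σ2) := by
    intro q k
    rw [hSINR]
    have h1 : h k * (q / h k) = q := by
      rw [mul_comm]; exact div_mul_cancel₀ q (ne_of_gt (hh k))
    have h2 : (∑ j ∈ univ.erase k, hc k j * (q / h j)) = q * ζinv k := by
      rw [hζinv, Finset.mul_sum]
      exact Finset.sum_congr rfl fun j hj => by ring
    rw [h1, h2]
    congr 1
    field_simp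
  constructor
  · intro q hq hs k
    have hD : 0 < q * ((Γ k)⁻¹ + ζinv k) + σ2 := by
      have := hζnn k
      have := inv_pos.mpr (hΓ k)
      nlinarith
    have heq : q / (q * ((Γ k)⁻¹ + ζinv k) + σ2) = γs k := by
      rw [← key]; exact hs k
    have hq1 : q = γs k * (q * ((Γ k)⁻¹ + ζinv k) + σ2) :=
      (div_eq_iff (ne_of_gt hD)).mp heq
    have hq2 : q * (1 - γs k * ((Γ k)⁻¹ + ζinv k)) = σ2 * γs k := by
      linear_combination hq1
    have hlt : γs k * ((Γ k)⁻¹ + ζinv k) < 1 := by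
      by_contra hcon
      push_neg at hcon
      nlinarith [hγs k]
    refine ⟨hlt, ?_⟩
    rw [eq_div_iff (by linarith : (1 : ℝ) - γs k * ((Γ k)⁻¹ + ζinv k) ≠ 0)]
    linarith [hq2]
  · intro qv hlt hqv hsame k
    have hfun : (fun j => qv j / h j) = (fun j => qv k / h j) :=
      funext fun j => by rw [← hsame k j]
    rw [hfun, key]
    set q := qv k with hqdef
    have hd : 0 < 1 - γs k * ((Γ k)⁻¹ + ζinv k) := by linarith [hlt k]
    have hq1 : q * (1 - γs k * ((Γ k)⁻¹ + ζinv k)) = σ2 * γs k := by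
      rw [hqdef, hqv k, div_mul_cancel₀ _ (ne_of_gt hd)]
    have hqpos : 0 < q := by
      rw [hqdef, hqv k]
      exact div_pos (mul_pos hσ2 (hγs k)) hd
    have hD : 0 < q * ((Γ k)⁻¹ + ζinv k) + σ2 := by
      have := hζnn k
      have := inv_pos.mpr (hΓ k)
      nlinarith
    rw [div_eq_iff (ne_of_gt hD)]
    linear_combination hq1
end

section
/- Fix K ≥ 2. For k = 1,…,K, let (α_k(l))_{l≥1} be mutually independent real i.i.d. sequences on a common probability space with E[α_k(l)] = 0, Var[α_k(l)] = σ_k² > 0, and finite eighth moment; for each L let α_k^{(L)} = (α_k(1),…,α_k(L)) and let A_k^{(L)} = M(α_k^{(L)}) be the associated L×(L−1) upper-triangular Toeplitz matrix. Then for each k, the quantity S_k^{(L)} = Σ_{j≠k} ( ‖(A_k^{(L)})ᵀ α_j^{(L)}‖² + ‖(A_j^{(L)})ᵀ α_k^{(L)}‖² + (α_k^{(L)}·α_j^{(L)})² ) / ( (α_k^{(L)}·α_k^{(L)})·(α_j^{(L)}·α_j^{(L)}) ) converges almost surely to K − 1 as L → ∞. (Equivalently, with ARake receivers and flat power delay profile,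 N·ζ_k^{−1} → K − 1 almost surely.) -/
open MeasureTheory ProbabilityTheory Matrix Filter Finset

/-- The `L×(L−1)` upper-triangular Toeplitz matrix `M(v)` built from the first `L`
entries of the sequence `v` (`0`-based indices: entry `(l,i)` equals `v (L+l−i−1)`
when `l ≤ i`, i.e. `M(v)_{l,i} = v(L+l−i)` in the paper's `1`-based indexing). -/
def toepMatrix (L : ℕ) (v : ℕ → ℝ) : Matrix (Fin L) (Fin (L - 1)) ℝ :=
  fun l i => if (l : ℕ) ≤ (i : ℕ) then v (L + (l : ℕ) - (i : ℕ) - 1) else 0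

/-- Squared Euclidean norm of a finite vector. -/
noncomputable def normSq {m : ℕ} (x : Fin m → ℝ) : ℝ := ∑ i, x i ^ 2

set_option linter.unusedSectionVars false
set_option linter.unusedTactic false
set_option linter.unusedVariables false

noncomputable section ArakeAux

/-! ### Deterministic correlation algebra -/

def corS (x y : ℕ → ℝ) (L : ℕ) (m : ℤ) : ℝ :=
  ∑ p ∈ (range L ×ˢ range L).filter (fun p => (p.1 : ℤ) - p.2 = m), x p.1 * y p.2

def SS (L : ℕ) : Finset (ℕ × ℕ × ℕ) :=
  (range L ×ˢ range L ×ˢ range L).filter fun p => 1 ≤ p.1 ∧ p.2.1 + p.1 < L ∧ p.2.2 + p.1 < L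

lemma corS_zero (x y : ℕ → ℝ) (L : ℕ) :
    corS x y L 0 = ∑ l ∈ range L, x l * y l := by
  unfold corS
  refine Finset.sum_nbij' (fun p => p.1) (fun l => (l, l)) ?_ ?_ ?_ ?_ ?_
  · intro p hp; simp only [mem_filter, mem_product, mem_range] at hp ⊢; omega
  · intro l hl; simp only [mem_filter, mem_product, mem_range] at hl ⊢; omega
  · intro p hp; simp only [mem_filter, mem_product, mem_range] at hp
    have : p.1 = p.2 := by omega
    simp [Prod.ext_iff, this]
  · intro l hl; rfl
  · intro p hp; simp only [mem_filter, mem_product, mem_range] at hp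
    have : p.2 = p.1 := by omega
    rw [this]

lemma corS_pos (x y : ℕ → ℝ) (L t : ℕ) :
    corS x y L ((t : ℤ) + 1) = ∑ l ∈ range (L - (t + 1)), x (l + (t + 1)) * y l := by
  unfold corS
  refine (Finset.sum_nbij' (fun p => p.2) (fun l => (l + (t + 1), l)) ?_ ?_ ?_ ?_ ?_).symm.symm
  · intro p hp; simp only [mem_filter, mem_product, mem_range] at hp ⊢; omega
  · intro l hl; simp only [mem_filter, mem_product, mem_range] at hl ⊢
    constructor; constructor <;> omega
    push_cast; omega
  · intro p hp; simp only [mem_filter, mem_product, mem_range] at hp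
    have : p.1 = p.2 + (t + 1) := by omega
    simp [Prod.ext_iff, this]
  · intro l hl; rfl
  · intro p hp; simp only [mem_filter, mem_product, mem_range] at hp
    have : p.1 = p.2 + (t + 1) := by omega
    rw [this]

lemma corS_neg (x y : ℕ → ℝ) (L t : ℕ) :
    corS x y L (-((t : ℤ) + 1)) = ∑ l ∈ range (L - (t + 1)), x l * y (l + (t + 1)) := by
  unfold corS
  refine (Finset.sum_nbij' (fun p => p.1) (fun l => (l, l + (t + 1))) ?_ ?_ ?_ ?_ ?_).symm.symm
  · intro p hp; simp only [mem_filter, mem_product, mem_range] at hp ⊢; omega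
  · intro l hl; simp only [mem_filter, mem_product, mem_range] at hl ⊢
    constructor; constructor <;> omega
    push_cast; omega
  · intro p hp; simp only [mem_filter, mem_product, mem_range] at hp
    have : p.2 = p.1 + (t + 1) := by omega
    simp [Prod.ext_iff, this]
  · intro l hl; rfl
  · intro p hp; simp only [mem_filter, mem_product, mem_range] at hp
    have : p.2 = p.1 + (t + 1) := by omega
    rw [this]

lemma Icc_sum_split (n : ℕ) (f : ℤ → ℝ) :
    ∑ m ∈ Finset.Icc (-(n : ℤ)) n, f m
      = f 0 + ∑ t ∈ range n, (f ((t : ℤ) + 1) + f (-((t : ℤ) + 1))) := by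
  induction n with
  | zero => simp
  | succ n ih =>
    have h1 : (Finset.Icc (-(n + 1 : ℤ)) (n + 1))
        = insert (-(n + 1 : ℤ)) (insert ((n : ℤ) + 1) (Finset.Icc (-(n : ℤ)) n)) := by
      ext m; simp only [Finset.mem_Icc, Finset.mem_insert]; push_cast; omega
    push_cast
    rw [h1, Finset.sum_insert, Finset.sum_insert, ih, Finset.sum_range_succ]
    · push_cast; ring
    · simp only [Finset.mem_Icc]; omega
    · simp only [Finset.mem_insert, Finset.mem_Icc]; push_cast; omega

lemma sum_sq_cor (a b : ℕ → ℝ) (L : ℕ) :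
    ∑ m ∈ Finset.Icc (-(L - 1 : ℕ) : ℤ) ((L - 1 : ℕ) : ℤ), (corS a b L m) ^ 2
      = ∑ q ∈ ((range L ×ˢ range L) ×ˢ (range L ×ˢ range L)).filter
          (fun q => (q.1.1 : ℤ) - q.1.2 = (q.2.1 : ℤ) - q.2.2),
          a q.1.1 * b q.1.2 * (a q.2.1 * b q.2.2) := by
  rw [← Finset.sum_fiberwise_of_maps_to (g := fun q : (ℕ×ℕ)×(ℕ×ℕ) => (q.1.1 : ℤ) - q.1.2)
      (t := Finset.Icc (-(L - 1 : ℕ) : ℤ) ((L - 1 : ℕ) : ℤ)) ?_]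
  · refine Finset.sum_congr rfl fun m hm => ?_
    have h1 : ((((range L ×ˢ range L) ×ˢ (range L ×ˢ range L)).filter
          (fun q => (q.1.1 : ℤ) - q.1.2 = (q.2.1 : ℤ) - q.2.2)).filter
          (fun q => (q.1.1 : ℤ) - q.1.2 = m))
        = ((range L ×ˢ range L).filter (fun p => (p.1 : ℤ) - p.2 = m)) ×ˢ
          ((range L ×ˢ range L).filter (fun p => (p.1 : ℤ) - p.2 = m)) := by
      rw [Finset.filter_filter, ← Finset.filter_product]
      exact Finset.filter_congr (fun q _ => by constructor <;> (intro h; omega))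
    rw [h1, Finset.sum_product, sq, corS, Finset.sum_mul_sum]
  · intro q hq
    simp only [mem_filter, mem_product, mem_range] at hq
    simp only [Finset.mem_Icc]
    omega

lemma sum_corr_prod (a b : ℕ → ℝ) (L : ℕ) :
    ∑ d ∈ Finset.Icc (-(L - 1 : ℕ) : ℤ) ((L - 1 : ℕ) : ℤ), corS a a L d * corS b b L d
      = ∑ q ∈ ((range L ×ˢ range L) ×ˢ (range L ×ˢ range L)).filter
          (fun q => (q.1.1 : ℤ) - q.1.2 = (q.2.1 : ℤ) - q.2.2),
          a q.1.1 * a q.1.2 * (b q.2.1 * b q.2.2) := by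
  rw [← Finset.sum_fiberwise_of_maps_to (g := fun q : (ℕ×ℕ)×(ℕ×ℕ) => (q.1.1 : ℤ) - q.1.2)
      (t := Finset.Icc (-(L - 1 : ℕ) : ℤ) ((L - 1 : ℕ) : ℤ)) ?_]
  · refine Finset.sum_congr rfl fun m hm => ?_
    have h1 : ((((range L ×ˢ range L) ×ˢ (range L ×ˢ range L)).filter
          (fun q => (q.1.1 : ℤ) - q.1.2 = (q.2.1 : ℤ) - q.2.2)).filter
          (fun q => (q.1.1 : ℤ) - q.1.2 = m))
        = ((range L ×ˢ range L).filter (fun p => (p.1 : ℤ) - p.2 = m)) ×ˢ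
          ((range L ×ˢ range L).filter (fun p => (p.1 : ℤ) - p.2 = m)) := by
      rw [Finset.filter_filter, ← Finset.filter_product]
      exact Finset.filter_congr (fun q _ => by constructor <;> (intro h; omega))
    rw [h1, Finset.sum_product, corS, corS, Finset.sum_mul_sum]
  · intro q hq
    simp only [mem_filter, mem_product, mem_range] at hq
    simp only [Finset.mem_Icc]
    omega

lemma master_swap (a b : ℕ → ℝ) (L : ℕ) :
    ∑ q ∈ ((range L ×ˢ range L) ×ˢ (range L ×ˢ range L)).filter
        (fun q => (q.1.1 : ℤ) - q.1.2 = (q.2.1 : ℤ) - q.2.2),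
        a q.1.1 * b q.1.2 * (a q.2.1 * b q.2.2)
      = ∑ q ∈ ((range L ×ˢ range L) ×ˢ (range L ×ˢ range L)).filter
          (fun q => (q.1.1 : ℤ) - q.1.2 = (q.2.1 : ℤ) - q.2.2),
          a q.1.1 * a q.1.2 * (b q.2.1 * b q.2.2) := by
  refine Finset.sum_nbij' (fun q => ((q.1.1, q.2.1), (q.1.2, q.2.2)))
    (fun q => ((q.1.1, q.2.1), (q.1.2, q.2.2))) ?_ ?_ ?_ ?_ ?_
  · intro q hq; simp only [mem_filter, mem_product, mem_range] at hq ⊢; omega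
  · intro q hq; simp only [mem_filter, mem_product, mem_range] at hq ⊢; omega
  · intro q hq; rfl
  · intro q hq; rfl
  · intro q hq; ring

lemma corS_swap (a b : ℕ → ℝ) (L t : ℕ) :
    corS b a L ((t : ℤ) + 1) = corS a b L (-((t : ℤ) + 1)) := by
  rw [corS_pos, corS_neg]
  exact Finset.sum_congr rfl fun l _ => mul_comm _ _

lemma corS_symm (x : ℕ → ℝ) (L t : ℕ) :
    corS x x L (-((t : ℤ) + 1)) = corS x x L ((t : ℤ) + 1) := by
  rw [corS_pos, corS_neg]
  exact Finset.sum_congr rfl fun l _ => mul_comm _ _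

lemma toep_entry (a b : ℕ → ℝ) (L : ℕ) (i : Fin (L - 1)) :
    (toepMatrix L a).transpose.mulVec (fun l : Fin L => b l) i
      = corS a b L (((L - 2 - (i : ℕ) : ℕ) : ℤ) + 1) := by
  have hi : (i : ℕ) < L - 1 := i.isLt
  have hcast : ((L - 2 - (i : ℕ) : ℕ) : ℤ) + 1 = (((L - 2 - (i : ℕ) : ℕ) : ℕ) : ℤ) + 1 := rfl
  rw [corS_pos]
  have h2 : L - 2 - (i : ℕ) + 1 = L - 1 - (i : ℕ) := by omega
  have h5 : L - (L - 1 - (i : ℕ)) = (i : ℕ) + 1 := by omega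
  rw [h2, h5]
  simp only [Matrix.mulVec, Matrix.transpose_apply, dotProduct, toepMatrix]
  rw [Fin.sum_univ_eq_sum_range
    (fun l => (if l ≤ (i : ℕ) then a (L + l - (i : ℕ) - 1) else 0) * b l)]
  have h3 : ∀ l ∈ range L, (if l ≤ (i : ℕ) then a (L + l - (i : ℕ) - 1) else 0) * b l
      = if l ≤ (i : ℕ) then a (L + l - (i : ℕ) - 1) * b l else 0 := by
    intro l _; split <;> simp
  rw [Finset.sum_congr rfl h3, ← Finset.sum_filter]
  have h4 : (range L).filter (fun l => l ≤ (i : ℕ)) = range ((i : ℕ) + 1) := by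
    ext l; simp only [mem_filter, mem_range]; omega
  rw [h4]
  refine Finset.sum_congr rfl fun l hl => ?_
  simp only [mem_range] at hl
  have h6 : L + l - (i : ℕ) - 1 = l + (L - 1 - (i : ℕ)) := by omega
  rw [h6]

lemma normSq_toep (a b : ℕ → ℝ) (L : ℕ) :
    normSq ((toepMatrix L a).transpose.mulVec (fun l : Fin L => b l))
      = ∑ t ∈ range (L - 1), (corS a b L ((t : ℤ) + 1)) ^ 2 := by
  unfold normSq
  rw [Finset.sum_congr rfl (fun i _ => by rw [toep_entry a b L i])]
  rw [Fin.sum_univ_eq_sum_range (fun m => (corS a b L (((L - 2 - m : ℕ) : ℤ) + 1)) ^ 2)]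
  refine Finset.sum_nbij' (fun m => L - 2 - m) (fun t => L - 2 - t) ?_ ?_ ?_ ?_ ?_
  · intro m hm; simp only [mem_range] at hm ⊢; omega
  · intro t ht; simp only [mem_range] at ht ⊢; omega
  · intro m hm; simp only [mem_range] at hm; show L - 2 - (L - 2 - m) = m; omega
  · intro t ht; simp only [mem_range] at ht; show L - 2 - (L - 2 - t) = t; omega
  · intro m hm; rfl

lemma T_as_S (a b : ℕ → ℝ) (L : ℕ) :
    ∑ t ∈ range (L - 1), corS a a L ((t : ℤ) + 1) * corS b b L ((t : ℤ) + 1)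
      = ∑ p ∈ SS L, a (p.2.1 + p.1) * a p.2.1 * (b (p.2.2 + p.1) * b p.2.2) := by
  rw [← Finset.sum_fiberwise_of_maps_to (g := fun p : ℕ × ℕ × ℕ => p.1 - 1)
      (t := range (L - 1)) ?_]
  · refine Finset.sum_congr rfl fun t ht => ?_
    simp only [mem_range] at ht
    rw [corS_pos, corS_pos, Finset.sum_mul_sum, ← Finset.sum_product']
    refine Finset.sum_nbij' (fun q => (t + 1, q.1, q.2)) (fun p => (p.2.1, p.2.2)) ?_ ?_ ?_ ?_ ?_
    · intro q hq
      simp only [mem_product, mem_range] at hq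
      simp only [mem_filter, SS, mem_product, mem_range]
      omega
    · intro p hp
      simp only [SS, mem_filter, mem_product, mem_range] at hp
      simp only [mem_product, mem_range]
      omega
    · intro q hq; rfl
    · intro p hp
      simp only [SS, mem_filter, mem_product, mem_range] at hp
      have : p.1 = t + 1 := by omega
      exact Prod.ext this.symm rfl
    · intro q hq; rfl
  · intro p hp
    simp only [SS, mem_filter, mem_product, mem_range] at hp
    simp only [mem_range]
    omega

theorem key_identity (a b : ℕ → ℝ) (L : ℕ) :
    normSq ((toepMatrix L a).transpose.mulVec (fun l : Fin L => b l))
      + normSq ((toepMatrix L b).transpose.mulVec (fun l : Fin L => a l))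
      + (∑ l : Fin L, a l * b l) ^ 2
    = (∑ l ∈ range L, a l * a l) * (∑ l ∈ range L, b l * b l)
      + 2 * ∑ p ∈ SS L, a (p.2.1 + p.1) * a p.2.1 * (b (p.2.2 + p.1) * b p.2.2) := by
  have hdot : (∑ l : Fin L, a l * b l) = corS a b L 0 := by
    rw [corS_zero, Fin.sum_univ_eq_sum_range (fun l => a l * b l)]
  rw [normSq_toep a b L, normSq_toep b a L, hdot]
  have hL1 : ∑ t ∈ range (L - 1), (corS b a L ((t : ℤ) + 1)) ^ 2
      = ∑ t ∈ range (L - 1), (corS a b L (-((t : ℤ) + 1))) ^ 2 :=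
    Finset.sum_congr rfl fun t _ => by rw [corS_swap]
  rw [hL1]
  have hLHS : ∑ t ∈ range (L - 1), (corS a b L ((t : ℤ) + 1)) ^ 2
        + ∑ t ∈ range (L - 1), (corS a b L (-((t : ℤ) + 1))) ^ 2
        + (corS a b L 0) ^ 2
      = ∑ m ∈ Finset.Icc (-(L - 1 : ℕ) : ℤ) ((L - 1 : ℕ) : ℤ), (corS a b L m) ^ 2 := by
    rw [Icc_sum_split (L - 1) (fun m => (corS a b L m) ^ 2), Finset.sum_add_distrib]
    ring
  rw [hLHS, sum_sq_cor, master_swap, ← sum_corr_prod,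
    Icc_sum_split (L - 1) (fun d => corS a a L d * corS b b L d)]
  have hsym : ∑ t ∈ range (L - 1),
        (corS a a L ((t : ℤ) + 1) * corS b b L ((t : ℤ) + 1)
          + corS a a L (-((t : ℤ) + 1)) * corS b b L (-((t : ℤ) + 1)))
      = 2 * ∑ t ∈ range (L - 1), corS a a L ((t : ℤ) + 1) * corS b b L ((t : ℤ) + 1) := by
    rw [Finset.mul_sum]
    refine Finset.sum_congr rfl fun t _ => ?_
    rw [corS_symm a L t, corS_symm b L t]
    ring
  rw [hsym, T_as_S, corS_zero, corS_zero]


/-! ### Probabilistic part -/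

section Prob
variable {Ω : Type} [MeasureSpace Ω] [IsProbabilityMeasure (ℙ : Measure Ω)]

lemma abs_pow_le_one_add_pow8 (x : ℝ) (m : ℕ) (hm : m ≤ 8) : |x ^ m| ≤ 1 + x ^ 8 := by
  rw [abs_pow]
  have h8 : x ^ 8 = |x| ^ 8 := by rw [← abs_pow, abs_of_nonneg (by positivity)]
  rw [h8]
  rcases le_total |x| 1 with h | h
  · have : |x| ^ m ≤ 1 := pow_le_one₀ (abs_nonneg x) h
    nlinarith [pow_nonneg (abs_nonneg x) 8]
  · have : |x| ^ m ≤ |x| ^ 8 := pow_le_pow_right₀ h hm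
    nlinarith

lemma int_pow_of_mom8 {f : Ω → ℝ} (hf : Measurable f)
    (h8 : Integrable (fun ω => f ω ^ 8)) (m : ℕ) (hm : m ≤ 8) :
    Integrable (fun ω => f ω ^ m) := by
  refine Integrable.mono' ((integrable_const 1).add h8) ((hf.pow_const m).aestronglyMeasurable)
    (ae_of_all _ fun ω => ?_)
  simpa using abs_pow_le_one_add_pow8 (f ω) m hm

lemma my_int_mul {f g : Ω → ℝ} (hfm : AEStronglyMeasurable f ℙ) (hgm : AEStronglyMeasurable g ℙ)
    (hf2 : Integrable (fun ω => f ω ^ 2)) (hg2 : Integrable (fun ω => g ω ^ 2)) :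
    Integrable (fun ω => f ω * g ω) := by
  refine Integrable.mono' (hf2.add hg2) (hfm.mul hgm) (ae_of_all _ fun ω => ?_)
  simp only [Pi.add_apply, Real.norm_eq_abs]
  have := sq_nonneg (|f ω| - |g ω|)
  have h1 : |f ω * g ω| = |f ω| * |g ω| := abs_mul _ _
  have h2 : f ω ^ 2 = |f ω| ^ 2 := (sq_abs _).symm
  have h3 : g ω ^ 2 = |g ω| ^ 2 := (sq_abs _).symm
  nlinarith [abs_nonneg (f ω), abs_nonneg (g ω)]


/-- If nonnegative integrable `U n` have `∫ U n ≤ c n` with `c` summable, then `U n → 0` a.s. -/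
lemma ae_tendsto_zero_of_integral_summable (U : ℕ → Ω → ℝ)
    (hmeasU : ∀ n, Measurable (U n)) (hnn : ∀ n ω, 0 ≤ U n ω)
    (hint : ∀ n, Integrable (U n)) (c : ℕ → ℝ) (hc : Summable c)
    (hbound : ∀ n, ∫ ω, U n ω ≤ c n) :
    ∀ᵐ ω ∂(ℙ : Measure Ω), Filter.Tendsto (fun n => U n ω) atTop (nhds 0) := by
  have hcnn : ∀ n, 0 ≤ c n := fun n => le_trans (integral_nonneg (hnn n)) (hbound n)
  have h1 : ∀ n, ∫⁻ ω, ENNReal.ofReal (U n ω) ∂ℙ = ENNReal.ofReal (∫ ω, U n ω) :=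
    fun n => (ofReal_integral_eq_lintegral_ofReal (hint n) (ae_of_all _ (hnn n))).symm
  have h2 : ∫⁻ ω, ∑' n, ENNReal.ofReal (U n ω) ∂ℙ < ⊤ := by
    rw [lintegral_tsum (fun n => ((hmeasU n).ennreal_ofReal).aemeasurable)]
    calc ∑' n, ∫⁻ ω, ENNReal.ofReal (U n ω) ∂ℙ
        = ∑' n, ENNReal.ofReal (∫ ω, U n ω) := by simp_rw [h1]
      _ ≤ ∑' n, ENNReal.ofReal (c n) := ENNReal.tsum_le_tsum fun n =>
            ENNReal.ofReal_le_ofReal (hbound n)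
      _ = ENNReal.ofReal (∑' n, c n) := (ENNReal.ofReal_tsum_of_nonneg hcnn hc).symm
      _ < ⊤ := ENNReal.ofReal_lt_top
  have h3 : ∀ᵐ ω ∂(ℙ : Measure Ω), (∑' n, ENNReal.ofReal (U n ω)) < ⊤ :=
    ae_lt_top' (AEMeasurable.ennreal_tsum fun n => ((hmeasU n).ennreal_ofReal).aemeasurable)
      h2.ne
  filter_upwards [h3] with ω hω
  have hsum : Summable (fun n => U n ω) := by
    have := ENNReal.summable_toReal hω.ne
    refine this.congr fun n => ?_
    rw [ENNReal.toReal_ofReal (hnn n ω)]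
  exact hsum.tendsto_atTop_zero

lemma SS_subset {L L' : ℕ} (h : L ≤ L') : SS L ⊆ SS L' := by
  intro p hp
  simp only [SS, mem_filter, mem_product, mem_range] at hp ⊢
  omega

lemma SS_card_le (L : ℕ) : (SS L).card ≤ L ^ 3 := by
  calc (SS L).card ≤ (range L ×ˢ range L ×ˢ range L).card := Finset.card_filter_le _ _
    _ = L ^ 3 := by simp [Finset.card_product]; ring

lemma SS_sdiff_card_le {L L' : ℕ} (h : L ≤ L') :
    ((SS L') \ (SS L)).card ≤ 2 * ((L' - L) * L' ^ 2) := by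
  classical
  set F1 : Finset (ℕ × ℕ × ℕ) := (range L' ×ˢ range L' ×ˢ range L').filter
    (fun p => L ≤ p.2.1 + p.1 ∧ p.2.1 + p.1 < L') with hF1
  set F2 : Finset (ℕ × ℕ × ℕ) := (range L' ×ˢ range L' ×ˢ range L').filter
    (fun p => L ≤ p.2.2 + p.1 ∧ p.2.2 + p.1 < L') with hF2
  have hsub : (SS L') \ (SS L) ⊆ F1 ∪ F2 := by
    intro p hp
    simp only [SS, Finset.mem_sdiff, mem_filter, mem_product, mem_range] at hp
    simp only [hF1, hF2, Finset.mem_union, mem_filter, mem_product, mem_range]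
    omega
  have hc1 : F1.card ≤ (L' - L) * L' ^ 2 := by
    have : F1.card ≤ ((Finset.Ico L L') ×ˢ (range L' ×ˢ range L')).card := by
      refine Finset.card_le_card_of_injOn (fun p => (p.2.1 + p.1, p.2.1, p.2.2)) ?_ ?_
      · intro p hp
        simp only [Finset.mem_coe, hF1, mem_filter, mem_product, mem_range] at hp
        simp only [Finset.mem_coe, mem_product, Finset.mem_Ico, mem_range]
        omega
      · intro p hp q hq hpq
        simp only [Prod.ext_iff] at hpq ⊢
        obtain ⟨h1, h2, h3⟩ := hpq
        exact ⟨by omega, h2, h3⟩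
    simpa [Finset.card_product, Nat.card_Ico, sq] using this
  have hc2 : F2.card ≤ (L' - L) * L' ^ 2 := by
    have : F2.card ≤ ((Finset.Ico L L') ×ˢ (range L' ×ˢ range L')).card := by
      refine Finset.card_le_card_of_injOn (fun p => (p.2.2 + p.1, p.2.1, p.2.2)) ?_ ?_
      · intro p hp
        simp only [Finset.mem_coe, hF2, mem_filter, mem_product, mem_range] at hp
        simp only [Finset.mem_coe, mem_product, Finset.mem_Ico, mem_range]
        omega
      · intro p hp q hq hpq
        simp only [Prod.ext_iff] at hpq ⊢
        obtain ⟨h1, h2, h3⟩ := hpq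
        exact ⟨by omega, h2, h3⟩
    simpa [Finset.card_product, Nat.card_Ico, sq] using this
  calc ((SS L') \ (SS L)).card ≤ (F1 ∪ F2).card := Finset.card_le_card hsub
    _ ≤ F1.card + F2.card := Finset.card_union_le _ _
    _ ≤ 2 * ((L' - L) * L' ^ 2) := by omega


lemma SS_mem_d {L : ℕ} {p : ℕ × ℕ × ℕ} (h : p ∈ SS L) : 1 ≤ p.1 := by
  simp only [SS, mem_filter] at h
  exact h.2.1

variable {K : ℕ} (α : Fin K → ℕ → Ω → ℝ)

def Zf (k j : Fin K) (p : ℕ × ℕ × ℕ) (ω : Ω) : ℝ :=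
  α k (p.2.1 + p.1) ω * α k p.2.1 ω * (α j (p.2.2 + p.1) ω * α j p.2.2 ω)

variable (hmeas : ∀ k l, Measurable (α k l))
  (hindep : iIndepFun (fun q : Fin K × ℕ => α q.1 q.2) ℙ)
  (hmean : ∀ k l, ∫ ω, α k l ω = 0)
  (hmom8 : ∀ k l, Integrable (fun ω => (α k l ω) ^ 8))

include hmeas hindep in
/-- Independence of a 4-fold product from row `k` and a 4-fold product from row `j`. -/
lemma indepFun_rows (k j : Fin K) (hkj : k ≠ j) (x₁ x₂ x₃ x₄ y₁ y₂ y₃ y₄ : ℕ) :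
    IndepFun (fun ω => α k x₁ ω * α k x₂ ω * (α k x₃ ω * α k x₄ ω))
      (fun ω => α j y₁ ω * α j y₂ ω * (α j y₃ ω * α j y₄ ω)) ℙ := by
  classical
  set S : Finset (Fin K × ℕ) := {(k, x₁), (k, x₂), (k, x₃), (k, x₄)} with hS
  set T : Finset (Fin K × ℕ) := {(j, y₁), (j, y₂), (j, y₃), (j, y₄)} with hT
  have hST : Disjoint S T := by
    simp only [hS, hT, Finset.disjoint_left, Finset.mem_insert, Finset.mem_singleton]
    rintro q h h'
    rcases h with rfl | rfl | rfl | rfl <;>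
      (rcases h' with h' | h' | h' | h' <;> (rw [Prod.mk.injEq] at h'; exact hkj h'.1))
  have hbase := hindep.indepFun_finset S T hST (fun q => hmeas q.1 q.2)
  have m1 : (k, x₁) ∈ S := by simp [hS]
  have m2 : (k, x₂) ∈ S := by simp [hS]
  have m3 : (k, x₃) ∈ S := by simp [hS]
  have m4 : (k, x₄) ∈ S := by simp [hS]
  have n1 : (j, y₁) ∈ T := by simp [hT]
  have n2 : (j, y₂) ∈ T := by simp [hT]
  have n3 : (j, y₃) ∈ T := by simp [hT]
  have n4 : (j, y₄) ∈ T := by simp [hT]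
  have := hbase.comp
    (φ := fun v : ↥S → ℝ => v ⟨_, m1⟩ * v ⟨_, m2⟩ * (v ⟨_, m3⟩ * v ⟨_, m4⟩))
    (ψ := fun v : ↥T → ℝ => v ⟨_, n1⟩ * v ⟨_, n2⟩ * (v ⟨_, n3⟩ * v ⟨_, n4⟩))
    (by fun_prop) (by fun_prop)
  exact this

include hmeas hindep in
/-- Independence of one variable from a product of three others (distinct indices). -/
lemma indepFun_single_triple (s y₁ y₂ y₃ : Fin K × ℕ)
    (h1 : s ≠ y₁) (h2 : s ≠ y₂) (h3 : s ≠ y₃) :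
    IndepFun (α s.1 s.2)
      (fun ω => α y₁.1 y₁.2 ω * α y₂.1 y₂.2 ω * α y₃.1 y₃.2 ω) ℙ := by
  classical
  set T : Finset (Fin K × ℕ) := {y₁, y₂, y₃} with hT
  have hST : Disjoint ({s} : Finset (Fin K × ℕ)) T := by
    simp only [hT, Finset.disjoint_left, Finset.mem_singleton, Finset.mem_insert]
    rintro q rfl h'
    rcases h' with h' | h' | h' <;> [exact h1 h'; exact h2 h'; exact h3 h']
  have hbase := hindep.indepFun_finset {s} T hST (fun q => hmeas q.1 q.2)
  have ms : s ∈ ({s} : Finset (Fin K × ℕ)) := Finset.mem_singleton_self s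
  have n1 : y₁ ∈ T := by simp [hT]
  have n2 : y₂ ∈ T := by simp [hT]
  have n3 : y₃ ∈ T := by simp [hT]
  have := hbase.comp
    (φ := fun v : ↥({s} : Finset (Fin K × ℕ)) → ℝ => v ⟨_, ms⟩)
    (ψ := fun v : ↥T → ℝ => v ⟨_, n1⟩ * v ⟨_, n2⟩ * v ⟨_, n3⟩) (_mγ := Real.measurableSpace)
    (measurable_pi_apply _) (by fun_prop)
  exact this

include hmeas hindep hmean in
lemma quad_zero (r : Fin K) (d l d' l' : ℕ) (hd : 1 ≤ d) (hd' : 1 ≤ d')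
    (hne : ¬(d = d' ∧ l = l')) :
    ∫ ω, α r (l + d) ω * α r l ω * (α r (l' + d') ω * α r l' ω) = 0 := by
  have asm : ∀ (x : ℕ), AEStronglyMeasurable (α r x) ℙ :=
    fun x => (hmeas r x).aestronglyMeasurable
  by_cases hc1 : l = l'
  · subst hc1
    have hdd : d ≠ d' := fun h => hne ⟨h, rfl⟩
    have hrw : (fun ω => α r (l + d) ω * α r l ω * (α r (l + d') ω * α r l ω))
        = (α r (l + d)) * (fun ω => α r l ω * α r (l + d') ω * α r l ω) := by
      funext ω; simp only [Pi.mul_apply]; ring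
    have hind := indepFun_single_triple α hmeas hindep (r, l + d) (r, l) (r, l + d') (r, l)
      (by simp [Prod.ext_iff]; omega) (by simp [Prod.ext_iff]; omega)
      (by simp [Prod.ext_iff]; omega)
    rw [hrw, hind.integral_mul_eq_mul_integral (asm _) (((asm _).mul (asm _)).mul (asm _)), hmean, zero_mul]
  · by_cases hc2 : l = l' + d'
    · have hrw : (fun ω => α r (l + d) ω * α r l ω * (α r (l' + d') ω * α r l' ω))
          = (α r l') * (fun ω => α r (l + d) ω * α r l ω * α r (l' + d') ω) := by
        funext ω; simp only [Pi.mul_apply]; ring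
      have hind := indepFun_single_triple α hmeas hindep (r, l') (r, l + d) (r, l) (r, l' + d')
        (by simp [Prod.ext_iff]; omega) (by simp [Prod.ext_iff]; omega)
        (by simp [Prod.ext_iff]; omega)
      rw [hrw, hind.integral_mul_eq_mul_integral (asm _) (((asm _).mul (asm _)).mul (asm _)), hmean, zero_mul]
    · have hrw : (fun ω => α r (l + d) ω * α r l ω * (α r (l' + d') ω * α r l' ω))
          = (α r l) * (fun ω => α r (l + d) ω * α r (l' + d') ω * α r l' ω) := by
        funext ω; simp only [Pi.mul_apply]; ring
      have hind := indepFun_single_triple α hmeas hindep (r, l) (r, l + d) (r, l' + d') (r, l')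
        (by simp [Prod.ext_iff]; omega) (by simp [Prod.ext_iff]; omega)
        (by simp [Prod.ext_iff]; omega)
      rw [hrw, hind.integral_mul_eq_mul_integral (asm _) (((asm _).mul (asm _)).mul (asm _)), hmean, zero_mul]

include hmeas hindep hmean in
lemma Z_orth (k j : Fin K) (hkj : k ≠ j) (p q : ℕ × ℕ × ℕ)
    (hp : 1 ≤ p.1) (hq : 1 ≤ q.1) (hne : p ≠ q) :
    ∫ ω, Zf α k j p ω * Zf α k j q ω = 0 := by
  obtain ⟨d, l, m⟩ := p
  obtain ⟨d', l', m'⟩ := q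
  simp only [Zf]
  have hrw : (fun ω => α k (l + d) ω * α k l ω * (α j (m + d) ω * α j m ω)
        * (α k (l' + d') ω * α k l' ω * (α j (m' + d') ω * α j m' ω)))
      = (fun ω => α k (l + d) ω * α k l ω * (α k (l' + d') ω * α k l' ω))
        * (fun ω => α j (m + d) ω * α j m ω * (α j (m' + d') ω * α j m' ω)) := by
    funext ω; simp only [Pi.mul_apply]; ring
  have hind := indepFun_rows α hmeas hindep k j hkj (l + d) l (l' + d') l'
    (m + d) m (m' + d') m'
  have asm : ∀ (r : Fin K) (x : ℕ), AEStronglyMeasurable (α r x) ℙ :=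
    fun r x => (hmeas r x).aestronglyMeasurable
  rw [hrw, hind.integral_mul_eq_mul_integral (((asm _ _).mul (asm _ _)).mul ((asm _ _).mul (asm _ _)))
    (((asm _ _).mul (asm _ _)).mul ((asm _ _).mul (asm _ _)))]
  by_cases hc : d = d' ∧ l = l'
  · have hmm : ¬(d = d' ∧ m = m') := by
      rintro ⟨h1, h2⟩; exact hne (by simp [Prod.ext_iff, hc.1, hc.2, h1, h2])
    rw [quad_zero α hmeas hindep hmean j d m d' m' hp hq hmm, mul_zero]
  · rw [quad_zero α hmeas hindep hmean k d l d' l' hp hq hc, zero_mul]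

include hmeas in
lemma measurable_Zf (k j : Fin K) (p : ℕ × ℕ × ℕ) : Measurable (Zf α k j p) :=
  (((hmeas _ _).mul (hmeas _ _)).mul ((hmeas _ _).mul (hmeas _ _)))

include hmeas hmom8 in
lemma int_pow_prod (x y : Fin K × ℕ) (n : ℕ) (hn : n ≤ 4) :
    Integrable (fun ω => (α x.1 x.2 ω) ^ n * (α y.1 y.2 ω) ^ n) := by
  refine my_int_mul ((hmeas _ _).pow_const n).aestronglyMeasurable
    ((hmeas _ _).pow_const n).aestronglyMeasurable ?_ ?_
  · have h1 : (fun ω => (α x.1 x.2 ω ^ n) ^ 2) = fun ω => α x.1 x.2 ω ^ (n * 2) := by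
      funext ω; rw [pow_mul]
    rw [h1]; exact int_pow_of_mom8 (hmeas _ _) (hmom8 _ _) (n * 2) (by omega)
  · have h1 : (fun ω => (α y.1 y.2 ω ^ n) ^ 2) = fun ω => α y.1 y.2 ω ^ (n * 2) := by
      funext ω; rw [pow_mul]
    rw [h1]; exact int_pow_of_mom8 (hmeas _ _) (hmom8 _ _) (n * 2) (by omega)

include hmeas hmom8 in
lemma int_pair_pow (x y : Fin K × ℕ) (n : ℕ) (hn : n ≤ 4) :
    Integrable (fun ω => (α x.1 x.2 ω * α y.1 y.2 ω) ^ n) := by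
  have h1 : (fun ω => (α x.1 x.2 ω * α y.1 y.2 ω) ^ n)
      = fun ω => α x.1 x.2 ω ^ n * α y.1 y.2 ω ^ n := by
    funext ω; rw [mul_pow]
  rw [h1]; exact int_pow_prod α hmeas hmom8 x y n hn

include hmeas hmom8 in
lemma int_Zf_sq (k j : Fin K) (p : ℕ × ℕ × ℕ) :
    Integrable (fun ω => (Zf α k j p ω) ^ 2) := by
  have h : (fun ω => (Zf α k j p ω) ^ 2)
      = fun ω => (α k (p.2.1 + p.1) ω * α k p.2.1 ω) ^ 2
          * (α j (p.2.2 + p.1) ω * α j p.2.2 ω) ^ 2 := by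
    funext ω; simp only [Zf]; ring
  rw [h]
  refine my_int_mul (((hmeas _ _).mul (hmeas _ _)).pow_const 2).aestronglyMeasurable
    (((hmeas _ _).mul (hmeas _ _)).pow_const 2).aestronglyMeasurable ?_ ?_
  · have h1 : (fun ω => ((α k (p.2.1 + p.1) ω * α k p.2.1 ω) ^ 2) ^ 2)
        = fun ω => (α k (p.2.1 + p.1) ω * α k p.2.1 ω) ^ 4 := by
      funext ω; rw [← pow_mul]
    rw [h1]; exact int_pair_pow α hmeas hmom8 (k, p.2.1 + p.1) (k, p.2.1) 4 le_rfl
  · have h1 : (fun ω => ((α j (p.2.2 + p.1) ω * α j p.2.2 ω) ^ 2) ^ 2)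
        = fun ω => (α j (p.2.2 + p.1) ω * α j p.2.2 ω) ^ 4 := by
      funext ω; rw [← pow_mul]
    rw [h1]; exact int_pair_pow α hmeas hmom8 (j, p.2.2 + p.1) (j, p.2.2) 4 le_rfl

include hmeas hmom8 in
lemma int_ZZ (k j : Fin K) (p q : ℕ × ℕ × ℕ) :
    Integrable (fun ω => Zf α k j p ω * Zf α k j q ω) :=
  my_int_mul (measurable_Zf α hmeas k j p).aestronglyMeasurable
    (measurable_Zf α hmeas k j q).aestronglyMeasurable
    (int_Zf_sq α hmeas hmom8 k j p) (int_Zf_sq α hmeas hmom8 k j q)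

include hmeas hindep in
lemma Z_diag (σsq : Fin K → ℝ) (hvar : ∀ k l, ∫ ω, (α k l ω) ^ 2 = σsq k)
    (k j : Fin K) (hkj : k ≠ j) (p : ℕ × ℕ × ℕ) (hp : 1 ≤ p.1) :
    ∫ ω, Zf α k j p ω * Zf α k j p ω = σsq k ^ 2 * σsq j ^ 2 := by
  obtain ⟨d, l, m⟩ := p
  simp only [Zf]
  have asm : ∀ (r : Fin K) (x : ℕ), AEStronglyMeasurable (α r x) ℙ :=
    fun r x => (hmeas r x).aestronglyMeasurable
  have hrw : (fun ω => α k (l + d) ω * α k l ω * (α j (m + d) ω * α j m ω)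
        * (α k (l + d) ω * α k l ω * (α j (m + d) ω * α j m ω)))
      = (fun ω => α k (l + d) ω * α k (l + d) ω * (α k l ω * α k l ω))
        * (fun ω => α j (m + d) ω * α j (m + d) ω * (α j m ω * α j m ω)) := by
    funext ω; simp only [Pi.mul_apply]; ring
  have hind := indepFun_rows α hmeas hindep k j hkj (l + d) (l + d) l l
    (m + d) (m + d) m m
  rw [hrw, hind.integral_mul_eq_mul_integral (((asm _ _).mul (asm _ _)).mul ((asm _ _).mul (asm _ _)))
    (((asm _ _).mul (asm _ _)).mul ((asm _ _).mul (asm _ _)))]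
  have pairE : ∀ (r : Fin K) (x y : ℕ), x ≠ y →
      ∫ ω, α r x ω * α r x ω * (α r y ω * α r y ω) = σsq r ^ 2 := by
    intro r x y hxy
    have hind2 : IndepFun (fun ω => (α r x ω) ^ 2) (fun ω => (α r y ω) ^ 2) ℙ := by
      have h := hindep.indepFun (i := (r, x)) (j := (r, y)) (by simp [Prod.ext_iff, hxy])
      exact h.comp (measurable_id.pow_const 2) (measurable_id.pow_const 2)
    have hrw2 : (fun ω => α r x ω * α r x ω * (α r y ω * α r y ω))
        = (fun ω => (α r x ω) ^ 2) * (fun ω => (α r y ω) ^ 2) := by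
      funext ω; simp only [Pi.mul_apply]; ring
    rw [hrw2, hind2.integral_mul_eq_mul_integral ((hmeas r x).pow_const 2).aestronglyMeasurable
      ((hmeas r y).pow_const 2).aestronglyMeasurable, hvar, hvar, sq]
  rw [pairE k (l + d) l (by omega), pairE j (m + d) m (by omega)]

include hmeas hindep hmom8 in
lemma exp_sq_sum (σsq : Fin K → ℝ) (hvar : ∀ k l, ∫ ω, (α k l ω) ^ 2 = σsq k)
    (hmean : ∀ k l, ∫ ω, α k l ω = 0)
    (k j : Fin K) (hkj : k ≠ j) (A : Finset (ℕ × ℕ × ℕ)) (hA : ∀ p ∈ A, 1 ≤ p.1) :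
    ∫ ω, (∑ p ∈ A, Zf α k j p ω) ^ 2 = A.card * (σsq k ^ 2 * σsq j ^ 2) := by
  have hZ_orth : ∀ p ∈ A, ∀ q ∈ A, p ≠ q → ∫ ω, Zf α k j p ω * Zf α k j q ω = 0 :=
    fun p hp q hq hne => Z_orth α hmeas hindep hmean k j hkj p q (hA p hp) (hA q hq) hne
  have hrw : (fun ω => (∑ p ∈ A, Zf α k j p ω) ^ 2)
      = fun ω => ∑ r ∈ A ×ˢ A, Zf α k j r.1 ω * Zf α k j r.2 ω := by
    funext ω
    rw [sq, Finset.sum_mul_sum, ← Finset.sum_product']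
  rw [hrw, integral_finset_sum _ (fun r _ => int_ZZ α hmeas hmom8 k j r.1 r.2)]
  have : ∀ r ∈ A ×ˢ A, ∫ ω, Zf α k j r.1 ω * Zf α k j r.2 ω
      = if r.1 = r.2 then σsq k ^ 2 * σsq j ^ 2 else 0 := by
    intro r hr
    simp only [Finset.mem_product] at hr
    by_cases h : r.1 = r.2
    · rw [if_pos h, h]
      exact Z_diag α hmeas hindep σsq hvar k j hkj r.2 (hA r.2 hr.2)
    · rw [if_neg h]
      exact hZ_orth r.1 hr.1 r.2 hr.2 h
  rw [Finset.sum_congr rfl this, Finset.sum_product]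
  have : ∀ p ∈ A, (∑ q ∈ A, if p = q then σsq k ^ 2 * σsq j ^ 2 else 0)
      = σsq k ^ 2 * σsq j ^ 2 := by
    intro p hp
    rw [Finset.sum_ite_eq A p (fun _ => σsq k ^ 2 * σsq j ^ 2), if_pos hp]
  rw [Finset.sum_congr rfl this, Finset.sum_const, nsmul_eq_mul]

include hmeas hmom8 in
lemma int_sq_sum (k j : Fin K) (A : Finset (ℕ × ℕ × ℕ)) :
    Integrable (fun ω => (∑ p ∈ A, Zf α k j p ω) ^ 2) := by
  have hrw : (fun ω => (∑ p ∈ A, Zf α k j p ω) ^ 2)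
      = fun ω => ∑ r ∈ A ×ˢ A, Zf α k j r.1 ω * Zf α k j r.2 ω := by
    funext ω; rw [sq, Finset.sum_mul_sum, ← Finset.sum_product']
  rw [hrw]
  exact integrable_finset_sum _ (fun r _ => int_ZZ α hmeas hmom8 k j r.1 r.2)

include hmeas hindep hmom8 in
lemma cross_as (σsq : Fin K → ℝ) (hvar : ∀ k l, ∫ ω, (α k l ω) ^ 2 = σsq k)
    (hmean : ∀ k l, ∫ ω, α k l ω = 0) (k j : Fin K) (hkj : k ≠ j) :
    ∀ᵐ ω ∂(ℙ : Measure Ω),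
      Tendsto (fun L => (∑ p ∈ SS L, Zf α k j p ω) / (L : ℝ) ^ 2) atTop (nhds 0) := by
  classical
  set C := σsq k ^ 2 * σsq j ^ 2 with hC
  have hC0 : 0 ≤ C := mul_nonneg (sq_nonneg _) (sq_nonneg _)
  set g : ℕ → Ω → ℝ := fun L ω => ∑ p ∈ SS L, Zf α k j p ω with hg
  have hgmeas : ∀ L, Measurable (g L) :=
    fun L => Finset.measurable_sum _ (fun p _ => measurable_Zf α hmeas k j p)
  have hgdiff : ∀ (M L : ℕ), M ≤ L → ∀ ω,
      g L ω - g M ω = ∑ p ∈ SS L \ SS M, Zf α k j p ω := by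
    intro M L h ω
    rw [Finset.sum_sdiff_eq_sub (SS_subset h)]
  -- the two auxiliary sequences
  set U : ℕ → Ω → ℝ := fun n ω => (g (n ^ 2) ω / (n : ℝ) ^ 4) ^ 2 with hU
  set V : ℕ → Ω → ℝ := fun n ω =>
    ∑ L ∈ Finset.Ico (n ^ 2) ((n + 1) ^ 2), ((g L ω - g (n ^ 2) ω) / (n : ℝ) ^ 4) ^ 2 with hV
  -- expectations
  have hUcalc : ∀ n : ℕ, ∫ ω, U n ω = ((SS (n ^ 2)).card * C) / (n : ℝ) ^ 8 := by
    intro n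
    have h1 : U n = fun ω => (g (n ^ 2) ω) ^ 2 / (n : ℝ) ^ 8 := by
      funext ω
      simp only [hU]
      rw [div_pow, ← pow_mul]
    rw [h1, integral_div,
      exp_sq_sum α hmeas hindep hmom8 σsq hvar hmean k j hkj _ (fun p hp => SS_mem_d hp)]
  have hVcalc : ∀ n : ℕ, ∫ ω, V n ω
      = ∑ L ∈ Finset.Ico (n ^ 2) ((n + 1) ^ 2), ((SS L \ SS (n ^ 2)).card * C) / (n : ℝ) ^ 8 := by
    intro n
    have h1 : V n = fun ω => ∑ L ∈ Finset.Ico (n ^ 2) ((n + 1) ^ 2),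
        (∑ p ∈ SS L \ SS (n ^ 2), Zf α k j p ω) ^ 2 / (n : ℝ) ^ 8 := by
      funext ω
      refine Finset.sum_congr rfl fun L hL => ?_
      simp only [Finset.mem_Ico] at hL
      rw [hgdiff (n ^ 2) L hL.1 ω, div_pow, ← pow_mul]
    rw [h1, integral_finset_sum _ (fun L _ =>
      ((int_sq_sum α hmeas hmom8 k j (SS L \ SS (n ^ 2))).div_const _))]
    refine Finset.sum_congr rfl fun L hL => ?_
    rw [integral_div, exp_sq_sum α hmeas hindep hmom8 σsq hvar hmean k j hkj _
      (fun p hp => SS_mem_d (Finset.mem_sdiff.mp hp).1)]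
  -- bounds
  have hsummable : Summable (fun n : ℕ => (192 * C) * (1 / (n : ℝ) ^ 2)) :=
    (Real.summable_one_div_nat_pow.mpr one_lt_two).mul_left _
  have hUbound : ∀ n : ℕ, ∫ ω, U n ω ≤ (192 * C) * (1 / (n : ℝ) ^ 2) := by
    intro n
    rw [hUcalc n]
    rcases Nat.eq_zero_or_pos n with rfl | hn
    · simp
    · have hn1 : (1 : ℝ) ≤ (n : ℝ) := by exact_mod_cast hn
      have hcard : ((SS (n ^ 2)).card : ℝ) ≤ (n : ℝ) ^ 6 := by
        have := SS_card_le (n ^ 2)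
        calc ((SS (n ^ 2)).card : ℝ) ≤ ((n ^ 2) ^ 3 : ℕ) := by exact_mod_cast this
          _ = (n : ℝ) ^ 6 := by push_cast; ring
      have hpos : (0 : ℝ) < (n : ℝ) ^ 8 := by positivity
      rw [div_le_iff₀ hpos]
      have : (192 * C) * (1 / (n : ℝ) ^ 2) * (n : ℝ) ^ 8 = 192 * C * (n : ℝ) ^ 6 := by
        field_simp
      rw [this]
      nlinarith [mul_le_mul_of_nonneg_right hcard hC0, pow_nonneg (le_trans zero_le_one hn1) 6]
  have hVbound : ∀ n : ℕ, ∫ ω, V n ω ≤ (192 * C) * (1 / (n : ℝ) ^ 2) := by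
    intro n
    rw [hVcalc n]
    rcases Nat.eq_zero_or_pos n with rfl | hn
    · norm_num
    · have hn0 : (n : ℝ) ≠ 0 := Nat.cast_ne_zero.mpr (by omega)
      have hncard : ∀ L ∈ Finset.Ico (n ^ 2) ((n + 1) ^ 2),
          ((SS L \ SS (n ^ 2)).card : ℝ) ≤ ((4 * n * (n + 1) ^ 4 : ℕ) : ℝ) := by
        intro L hL
        simp only [Finset.mem_Ico] at hL
        have h1 : ((SS L) \ (SS (n ^ 2))).card ≤ 2 * ((L - n ^ 2) * L ^ 2) :=
          SS_sdiff_card_le hL.1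
        have hd : L - n ^ 2 ≤ 2 * n := by
          have hne : (n + 1) ^ 2 = n ^ 2 + 2 * n + 1 := by ring
          omega
        have hL2 : L ^ 2 ≤ ((n + 1) ^ 2) ^ 2 := Nat.pow_le_pow_left (le_of_lt hL.2) 2
        have h2 : 2 * ((L - n ^ 2) * L ^ 2) ≤ 4 * n * (n + 1) ^ 4 := by
          calc 2 * ((L - n ^ 2) * L ^ 2) ≤ 2 * ((2 * n) * ((n + 1) ^ 2) ^ 2) :=
                Nat.mul_le_mul_left 2 (Nat.mul_le_mul hd hL2)
            _ = 4 * n * (n + 1) ^ 4 := by ring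
        exact_mod_cast le_trans h1 h2
      have hsum_card : (∑ L ∈ Finset.Ico (n ^ 2) ((n + 1) ^ 2),
          ((SS L \ SS (n ^ 2)).card : ℝ)) ≤ 192 * (n : ℝ) ^ 6 := by
        have hcount : (Finset.Ico (n ^ 2) ((n + 1) ^ 2)).card = 2 * n + 1 := by
          rw [Nat.card_Ico]; ring_nf; omega
        have hnat : (2 * n + 1) * (4 * n * (n + 1) ^ 4) ≤ 192 * n ^ 6 := by
          have e1 : (n + 1) ≤ 2 * n := by omega
          have e2 : (n + 1) ^ 4 ≤ (2 * n) ^ 4 := Nat.pow_le_pow_left e1 4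
          have e3 : 2 * n + 1 ≤ 3 * n := by omega
          calc (2 * n + 1) * (4 * n * (n + 1) ^ 4)
              ≤ (3 * n) * (4 * n * (2 * n) ^ 4) :=
                Nat.mul_le_mul e3 (Nat.mul_le_mul_left _ e2)
            _ = 192 * n ^ 6 := by ring
        calc (∑ L ∈ Finset.Ico (n ^ 2) ((n + 1) ^ 2), ((SS L \ SS (n ^ 2)).card : ℝ))
            ≤ ∑ _L ∈ Finset.Ico (n ^ 2) ((n + 1) ^ 2), ((4 * n * (n + 1) ^ 4 : ℕ) : ℝ) :=
              Finset.sum_le_sum hncard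
          _ = ((2 * n + 1 : ℕ) : ℝ) * ((4 * n * (n + 1) ^ 4 : ℕ) : ℝ) := by
              rw [Finset.sum_const, hcount, nsmul_eq_mul]
          _ = (((2 * n + 1) * (4 * n * (n + 1) ^ 4) : ℕ) : ℝ) := by push_cast; ring
          _ ≤ ((192 * n ^ 6 : ℕ) : ℝ) := by exact_mod_cast hnat
          _ = 192 * (n : ℝ) ^ 6 := by push_cast; ring
      calc ∑ L ∈ Finset.Ico (n ^ 2) ((n + 1) ^ 2), ((SS L \ SS (n ^ 2)).card * C) / (n : ℝ) ^ 8
          = (∑ L ∈ Finset.Ico (n ^ 2) ((n + 1) ^ 2), ((SS L \ SS (n ^ 2)).card : ℝ)) * C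
            / (n : ℝ) ^ 8 := by
            rw [Finset.sum_mul, Finset.sum_div]
        _ ≤ (192 * (n : ℝ) ^ 6) * C / (n : ℝ) ^ 8 := by gcongr
        _ = (192 * C) * (1 / (n : ℝ) ^ 2) := by field_simp
  -- integrability and measurability of U and V
  have h1U : ∀ n : ℕ, U n = fun ω => (g (n ^ 2) ω) ^ 2 / (n : ℝ) ^ 8 := by
    intro n; funext ω
    simp only [hU]
    rw [div_pow, ← pow_mul]
  have hUmeas : ∀ n, Measurable (U n) := by
    intro n; rw [h1U n]; exact ((hgmeas (n ^ 2)).pow_const 2).div_const _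
  have hUint : ∀ n, Integrable (U n) := by
    intro n; rw [h1U n]; exact (int_sq_sum α hmeas hmom8 k j (SS (n ^ 2))).div_const _
  have hVmeas : ∀ n, Measurable (V n) := by
    intro n
    exact Finset.measurable_sum _ (fun L _ =>
      (((hgmeas L).sub (hgmeas (n ^ 2))).div_const _).pow_const 2)
  have h1V : ∀ n : ℕ, V n = fun ω => ∑ L ∈ Finset.Ico (n ^ 2) ((n + 1) ^ 2),
      (∑ p ∈ SS L \ SS (n ^ 2), Zf α k j p ω) ^ 2 / (n : ℝ) ^ 8 := by
    intro n; funext ω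
    refine Finset.sum_congr rfl fun L hL => ?_
    simp only [Finset.mem_Ico] at hL
    rw [hgdiff (n ^ 2) L hL.1 ω, div_pow, ← pow_mul]
  have hVint : ∀ n, Integrable (V n) := by
    intro n; rw [h1V n]
    exact integrable_finset_sum _ (fun L _ =>
      (int_sq_sum α hmeas hmom8 k j (SS L \ SS (n ^ 2))).div_const _)
  have hUnn : ∀ (n : ℕ) (ω : Ω), 0 ≤ U n ω := fun n ω => sq_nonneg _
  have hVnn : ∀ (n : ℕ) (ω : Ω), 0 ≤ V n ω := fun n ω =>
    Finset.sum_nonneg fun L _ => sq_nonneg _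
  have hUa := ae_tendsto_zero_of_integral_summable U hUmeas hUnn hUint _ hsummable hUbound
  have hVa := ae_tendsto_zero_of_integral_summable V hVmeas hVnn hVint _ hsummable hVbound
  -- deterministic part
  have hsqrt_tendsto : Tendsto Nat.sqrt atTop atTop := by
    apply tendsto_atTop_atTop_of_monotone (fun a b hab => Nat.sqrt_le_sqrt hab)
    intro b
    exact ⟨b ^ 2, le_of_eq (Nat.sqrt_eq' b).symm⟩
  filter_upwards [hUa, hVa] with ω hUω hVω
  have hsqU : Tendsto (fun n => Real.sqrt (U n ω)) atTop (nhds 0) := by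
    have h := (Real.continuous_sqrt.tendsto 0).comp hUω
    rw [Real.sqrt_zero] at h; exact h
  have hsqV : Tendsto (fun n => Real.sqrt (V n ω)) atTop (nhds 0) := by
    have h := (Real.continuous_sqrt.tendsto 0).comp hVω
    rw [Real.sqrt_zero] at h; exact h
  have hb : Tendsto (fun n => Real.sqrt (U n ω) + Real.sqrt (V n ω)) atTop (nhds 0) := by
    simpa using hsqU.add hsqV
  have hbL : Tendsto
      (fun L => Real.sqrt (U (Nat.sqrt L) ω) + Real.sqrt (V (Nat.sqrt L) ω)) atTop (nhds 0) :=
    hb.comp hsqrt_tendsto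
  refine squeeze_zero_norm' ?_ hbL
  filter_upwards [eventually_ge_atTop 1] with L hL
  have hn1 : 1 ≤ Nat.sqrt L := Nat.le_sqrt.mpr (by omega)
  have hn2 : Nat.sqrt L ^ 2 ≤ L := Nat.sqrt_le' L
  have hn3 : L < (Nat.sqrt L + 1) ^ 2 := Nat.lt_succ_sqrt' L
  set n := Nat.sqrt L with hns
  have hnR : (1 : ℝ) ≤ (n : ℝ) := by exact_mod_cast hn1
  have hpos4 : (0 : ℝ) < (n : ℝ) ^ 4 := by positivity
  have hn2R : ((n : ℝ) ^ 2) ≤ (L : ℝ) := by exact_mod_cast hn2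
  have hpowLe : (n : ℝ) ^ 4 ≤ (L : ℝ) ^ 2 := by nlinarith
  have key1 : |g (n ^ 2) ω| / (n : ℝ) ^ 4 = Real.sqrt (U n ω) := by
    simp only [hU]
    rw [Real.sqrt_sq_eq_abs, abs_div, abs_of_pos hpos4]
  have key2 : |g L ω - g (n ^ 2) ω| / (n : ℝ) ^ 4 ≤ Real.sqrt (V n ω) := by
    have hmem : L ∈ Finset.Ico (n ^ 2) ((n + 1) ^ 2) := Finset.mem_Ico.mpr ⟨hn2, hn3⟩
    have h4 : ((g L ω - g (n ^ 2) ω) / (n : ℝ) ^ 4) ^ 2 ≤ V n ω := by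
      simp only [hV]
      exact Finset.single_le_sum (f := fun L' => ((g L' ω - g (n ^ 2) ω) / (n : ℝ) ^ 4) ^ 2)
        (fun i _ => sq_nonneg _) hmem
    calc |g L ω - g (n ^ 2) ω| / (n : ℝ) ^ 4
        = |(g L ω - g (n ^ 2) ω) / (n : ℝ) ^ 4| := by rw [abs_div, abs_of_pos hpos4]
      _ = Real.sqrt (((g L ω - g (n ^ 2) ω) / (n : ℝ) ^ 4) ^ 2) :=
          (Real.sqrt_sq_eq_abs _).symm
      _ ≤ Real.sqrt (V n ω) := Real.sqrt_le_sqrt h4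
  have habs : |g L ω| ≤ |g (n ^ 2) ω| + |g L ω - g (n ^ 2) ω| := by
    have h := abs_add_le (g (n ^ 2) ω) (g L ω - g (n ^ 2) ω)
    simpa using h
  have hLpos : (0 : ℝ) < (L : ℝ) ^ 2 := by
    have h1L : (1 : ℝ) ≤ (L : ℝ) := by exact_mod_cast hL
    positivity
  calc ‖g L ω / (L : ℝ) ^ 2‖ = |g L ω| / (L : ℝ) ^ 2 := by
        rw [Real.norm_eq_abs, abs_div, abs_of_pos hLpos]
    _ ≤ |g L ω| / (n : ℝ) ^ 4 :=
        div_le_div_of_nonneg_left (abs_nonneg _) hpos4 hpowLe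
    _ ≤ (|g (n ^ 2) ω| + |g L ω - g (n ^ 2) ω|) / (n : ℝ) ^ 4 := by gcongr
    _ = |g (n ^ 2) ω| / (n : ℝ) ^ 4 + |g L ω - g (n ^ 2) ω| / (n : ℝ) ^ 4 := add_div _ _ _
    _ ≤ Real.sqrt (U n ω) + Real.sqrt (V n ω) := by rw [key1]; gcongr

theorem slln_sq (hmeas : ∀ k l, Measurable (α k l))
    (hindep : iIndepFun (fun q : Fin K × ℕ => α q.1 q.2) ℙ)
    (hident : ∀ k l, IdentDistrib (α k l) (α k 0) ℙ ℙ)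
    (hmom8 : ∀ k l, Integrable (fun ω => (α k l ω) ^ 8))
    (σsq : Fin K → ℝ) (hvar : ∀ k l, ∫ ω, (α k l ω) ^ 2 = σsq k) (k : Fin K) :
    ∀ᵐ ω ∂(ℙ : Measure Ω),
      Tendsto (fun L : ℕ => (∑ l ∈ range L, (α k l ω) ^ 2) / (L : ℝ)) atTop (nhds (σsq k)) := by
  have h := strong_law_ae_real (fun l ω => (α k l ω) ^ 2)
    (int_pow_of_mom8 (hmeas k 0) (hmom8 k 0) 2 (by omega))
    (fun i j hij => by
      have hne : ((k, i) : Fin K × ℕ) ≠ (k, j) := by simp [Prod.ext_iff, hij]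
      exact (hindep.indepFun hne).comp (measurable_id.pow_const 2) (measurable_id.pow_const 2))
    (fun i => (hident k i).comp (measurable_id.pow_const 2))
  rw [hvar k 0] at h
  exact h



end Prob
end ArakeAux


/-- with ARake receivers and a flat power delay profile, the normalized
MAI-to-signal ratio converges to `K − 1`.  For `k = 1,…,K`, let `(α_k(l))_l` be mutually
independent real i.i.d. sequences with mean `0`, variance `σ_k² > 0` and finite eighth
moment, `α_k^{(L)}` the vector of the first `L` entries and `A_k = M(α_k^{(L)})` the
associated Toeplitz matrix.  Then
`S_k = ∑_{j≠k} (‖A_kᵀα_j‖² + ‖A_jᵀα_k‖² + (α_k·α_j)²)/((α_k·α_k)(α_j·α_j))`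
converges almost surely to `K − 1` as `L → ∞`. -/
theorem arake_flat_pdp_mai_limit
    (K : ℕ) (hK : 2 ≤ K)
    (Ω : Type) [MeasureSpace Ω] [IsProbabilityMeasure (ℙ : Measure Ω)]
    (α : Fin K → ℕ → Ω → ℝ)
    (hmeas : ∀ k l, Measurable (α k l))
    (hindep : iIndepFun (fun q : Fin K × ℕ => α q.1 q.2) ℙ)
    (hident : ∀ k l, IdentDistrib (α k l) (α k 0) ℙ ℙ)
    (σsq : Fin K → ℝ) (hσsq : ∀ k, 0 < σsq k)
    (hmean : ∀ k l, ∫ ω, α k l ω = 0)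
    (hvar : ∀ k l, ∫ ω, (α k l ω) ^ 2 = σsq k)
    (hmom8 : ∀ k l, Integrable (fun ω => (α k l ω) ^ 8)) :
    ∀ k : Fin K, ∀ᵐ ω ∂(ℙ : Measure Ω),
      Tendsto (fun L : ℕ =>
          ∑ j ∈ Finset.univ.erase k,
            (normSq ((toepMatrix L (fun l => α k l ω)).transpose.mulVec
                (fun l : Fin L => α j l ω))
              + normSq ((toepMatrix L (fun l => α j l ω)).transpose.mulVec
                (fun l : Fin L => α k l ω))
              + (∑ l : Fin L, α k l ω * α j l ω) ^ 2)
            / ((∑ l : Fin L, α k l ω * α k l ω) * (∑ l : Fin L, α j l ω * α j l ω)))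
        atTop (nhds ((K : ℝ) - 1)) := by

  intro k
  have hslln : ∀ᵐ ω ∂(ℙ : Measure Ω), ∀ r : Fin K,
      Tendsto (fun L : ℕ => (∑ l ∈ range L, (α r l ω) ^ 2) / (L : ℝ)) atTop (nhds (σsq r)) :=
    (MeasureTheory.ae_all_iff).mpr
      (fun r => slln_sq α hmeas hindep hident hmom8 σsq hvar r)
  have hcross : ∀ᵐ ω ∂(ℙ : Measure Ω), ∀ j ∈ Finset.univ.erase k,
      Tendsto (fun L => (∑ p ∈ SS L, Zf α k j p ω) / (L : ℝ) ^ 2) atTop (nhds 0) := by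
    rw [Finset.eventually_all]
    intro j hj
    exact cross_as α hmeas hindep hmom8 σsq hvar hmean k j
      (fun h => (Finset.ne_of_mem_erase hj) h.symm)
  filter_upwards [hslln, hcross] with ω hsllnω hcrossω
  have hterm : ∀ j ∈ Finset.univ.erase k,
      Tendsto (fun L : ℕ =>
        (normSq ((toepMatrix L (fun l => α k l ω)).transpose.mulVec
            (fun l : Fin L => α j l ω))
          + normSq ((toepMatrix L (fun l => α j l ω)).transpose.mulVec
            (fun l : Fin L => α k l ω))
          + (∑ l : Fin L, α k l ω * α j l ω) ^ 2)
        / ((∑ l : Fin L, α k l ω * α k l ω) * (∑ l : Fin L, α j l ω * α j l ω)))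
        atTop (nhds 1) := by
    intro j hj
    set a : ℕ → ℝ := fun l => α k l ω with ha
    set b : ℕ → ℝ := fun l => α j l ω with hb
    set QA : ℕ → ℝ := fun L => ∑ l ∈ range L, a l * a l with hQA
    set QB : ℕ → ℝ := fun L => ∑ l ∈ range L, b l * b l with hQB
    set G : ℕ → ℝ := fun L => ∑ p ∈ SS L, Zf α k j p ω with hG
    -- rewrite the summand using the key identity
    have hnum : ∀ L : ℕ,
        (normSq ((toepMatrix L (fun l => α k l ω)).transpose.mulVec
            (fun l : Fin L => α j l ω))
          + normSq ((toepMatrix L (fun l => α j l ω)).transpose.mulVec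
            (fun l : Fin L => α k l ω))
          + (∑ l : Fin L, α k l ω * α j l ω) ^ 2) = QA L * QB L + 2 * G L := by
      intro L
      exact key_identity a b L
    have hden : ∀ L : ℕ, (∑ l : Fin L, α k l ω * α k l ω) * (∑ l : Fin L, α j l ω * α j l ω)
        = QA L * QB L := by
      intro L
      rw [hQA, hQB]
      rw [Fin.sum_univ_eq_sum_range (fun l => a l * a l),
        Fin.sum_univ_eq_sum_range (fun l => b l * b l)]
    -- limits
    have hQAlim : Tendsto (fun L : ℕ => QA L / (L : ℝ)) atTop (nhds (σsq k)) := by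
      have h := hsllnω k
      refine h.congr fun L => ?_
      congr 1
      exact Finset.sum_congr rfl fun l _ => pow_two (a l)
    have hQBlim : Tendsto (fun L : ℕ => QB L / (L : ℝ)) atTop (nhds (σsq j)) := by
      have h := hsllnω j
      refine h.congr fun L => ?_
      congr 1
      exact Finset.sum_congr rfl fun l _ => pow_two (b l)
    have hGlim : Tendsto (fun L : ℕ => G L / (L : ℝ) ^ 2) atTop (nhds 0) := hcrossω j hj
    have hprodpos : 0 < σsq k * σsq j := mul_pos (hσsq k) (hσsq j)
    have hnumlim : Tendsto (fun L : ℕ => QA L / L * (QB L / L) + 2 * (G L / (L : ℝ) ^ 2))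
        atTop (nhds (σsq k * σsq j)) := by
      have := (hQAlim.mul hQBlim).add ((hGlim.const_mul 2))
      simpa using this
    have hdenlim : Tendsto (fun L : ℕ => QA L / L * (QB L / L))
        atTop (nhds (σsq k * σsq j)) := hQAlim.mul hQBlim
    have hratio := hnumlim.div hdenlim (ne_of_gt hprodpos)
    rw [div_self (ne_of_gt hprodpos)] at hratio
    refine hratio.congr' ?_
    filter_upwards [eventually_ge_atTop 1] with L hL
    have hLne : ((L : ℝ) ^ 2) ≠ 0 := by
      have : (L : ℝ) ≠ 0 := Nat.cast_ne_zero.mpr (by omega)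
      positivity
    have hLne1 : (L : ℝ) ≠ 0 := Nat.cast_ne_zero.mpr (by omega)
    simp only [Pi.div_apply]
    rw [hnum L, hden L]
    have hmul : QA L / L * (QB L / L) = QA L * QB L / (L : ℝ) ^ 2 := by
      rw [div_mul_div_comm]; ring_nf
    rw [hmul]
    rcases eq_or_ne (QA L * QB L) 0 with h0 | h0
    · rw [h0]; simp
    · field_simp
  -- sum over j
  have hsum := tendsto_finset_sum (Finset.univ.erase k) (fun j hj => hterm j hj)
  have hcard : ((Finset.univ.erase k).card : ℝ) = (K : ℝ) - 1 := by
    rw [Finset.card_erase_of_mem (Finset.mem_univ k), Finset.card_univ, Fintype.card_fin]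
    have : 1 ≤ K := by omega
    push_cast [Nat.cast_sub this]
    ring
  have : (∑ _j ∈ Finset.univ.erase k, (1 : ℝ)) = (K : ℝ) - 1 := by
    rw [Finset.sum_const, nsmul_eq_mul, mul_one, hcard]
  rw [this] at hsum
  exact hsum
end

section
/- Let β̄ ∈ (0,∞) and let N_c : ℕ → ℕ satisfy N_c(L)/L → β̄ as L → ∞. Then lim_{L→∞} (4/L²)·Σ_{i=1}^{L−1} i·min(L−i, N_c(L))/N_c(L) = ν(β̄), where ν(β̄) = (2/3)(3 − 3β̄ + β̄²) for β̄ ≤ 1 and ν(β̄) = 2/(3β̄) for β̄ > 1. -/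
open Filter Finset

/-- The asymptotic normalized self-interference factor. -/
noncomputable def nuFactor (β : ℝ) : ℝ :=
  if β ≤ 1 then (2 / 3) * (3 - 3 * β + β ^ 2) else 2 / (3 * β)

lemma sum_id_real (n : ℕ) : ∑ i ∈ range n, (i:ℝ) = n * (n - 1) / 2 := by
  induction n with
  | zero => simp
  | succ m ih => rw [Finset.sum_range_succ, ih]; push_cast; ring

lemma sum_sq_real (n : ℕ) : ∑ i ∈ range n, (i:ℝ)^2 = n * (n - 1) * (2*n - 1) / 6 := by
  induction n with
  | zero => simp
  | succ m ih => rw [Finset.sum_range_succ, ih]; push_cast; ring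

lemma T_real (n : ℕ) : ∑ i ∈ range n, (i:ℝ) * ((n - i : ℕ):ℝ) = ((n:ℝ)^3 - n)/6 := by
  have h : ∀ i ∈ range n, (i:ℝ) * ((n - i : ℕ):ℝ) = (n:ℝ) * i - (i:ℝ)^2 := by
    intro i hi
    rw [Nat.cast_sub (le_of_lt (Finset.mem_range.mp hi))]
    ring
  rw [Finset.sum_congr rfl h, Finset.sum_sub_distrib, ← Finset.mul_sum, sum_id_real, sum_sq_real]
  ring

lemma S_aux (L N : ℕ) (h : N ≤ L) :
    ∑ i ∈ Icc 1 (L-1), (i:ℝ) * ((min (L-i) N : ℕ):ℝ)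
      = ((L:ℝ)^3 - L - ((L-N:ℕ):ℝ)^3 + ((L-N:ℕ):ℝ)) / 6 := by
  have hsub : Icc 1 (L-1) ⊆ range L := by
    intro i hi
    simp only [Finset.mem_Icc] at hi
    simp only [Finset.mem_range]
    omega
  have hzero : ∀ i ∈ range L, i ∉ Icc 1 (L-1) → (i:ℝ) * ((min (L-i) N : ℕ):ℝ) = 0 := by
    intro i hi hni
    simp only [Finset.mem_range] at hi
    simp only [Finset.mem_Icc] at hni
    have : i = 0 := by omega
    simp [this]
  rw [Finset.sum_subset hsub hzero]
  have key : ∀ i ∈ range L, (i:ℝ) * ((min (L-i) N : ℕ):ℝ)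
      = (i:ℝ) * ((L - i : ℕ):ℝ) - (i:ℝ) * (((L-N) - i : ℕ):ℝ) := by
    intro i hi
    have h1 : min (L-i) N = (L-i) - ((L-N) - i) := by omega
    rw [h1, Nat.cast_sub (by omega)]
    ring
  rw [Finset.sum_congr rfl key, Finset.sum_sub_distrib, T_real]
  have h2 : ∑ i ∈ range L, (i:ℝ) * (((L-N) - i : ℕ):ℝ)
      = ∑ i ∈ range (L-N), (i:ℝ) * (((L-N) - i : ℕ):ℝ) := by
    refine (Finset.sum_subset (Finset.range_subset_range.mpr (Nat.sub_le L N)) ?_).symm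
    intro i _ hi
    simp only [Finset.mem_range, not_lt] at hi
    have h3 : (L-N) - i = 0 := by omega
    rw [h3]; simp
  rw [h2, T_real]
  ring

lemma EA_eq (L N : ℕ) (h1 : 1 ≤ N) (h2 : N ≤ L) :
    (4/(L:ℝ)^2) * ∑ i ∈ Icc 1 (L-1), (i:ℝ) * ((min (L-i) N : ℕ):ℝ) / ((N:ℕ):ℝ)
      = (2/3) * (1 + (1 - (N:ℝ)/(L:ℝ)) + (1 - (N:ℝ)/(L:ℝ))^2 - 1/(L:ℝ)^2) := by
  have hl0 : (L:ℝ) ≠ 0 := Nat.cast_ne_zero.mpr (by omega)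
  have hn0 : (N:ℝ) ≠ 0 := Nat.cast_ne_zero.mpr (by omega)
  have hκ : ((L - N : ℕ):ℝ) = (L:ℝ) - (N:ℝ) := by
    rw [Nat.cast_sub h2]
  rw [show (∑ i ∈ Icc 1 (L-1), (i:ℝ) * ((min (L-i) N : ℕ):ℝ) / ((N:ℕ):ℝ))
      = (∑ i ∈ Icc 1 (L-1), (i:ℝ) * ((min (L-i) N : ℕ):ℝ)) / (N:ℝ) from (Finset.sum_div _ _ _).symm,
    S_aux L N h2, hκ]
  field_simp
  ring

lemma EB_eq (L N : ℕ) (h1 : 1 ≤ L) (h2 : L ≤ N) :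
    (4/(L:ℝ)^2) * ∑ i ∈ Icc 1 (L-1), (i:ℝ) * ((min (L-i) N : ℕ):ℝ) / ((N:ℕ):ℝ)
      = (2/3) * (1/((N:ℝ)/(L:ℝ))) * (1 - 1/(L:ℝ)^2) := by
  have hl0 : (L:ℝ) ≠ 0 := Nat.cast_ne_zero.mpr (by omega)
  have hn0 : (N:ℝ) ≠ 0 := Nat.cast_ne_zero.mpr (by omega)
  have key : ∀ i ∈ Icc 1 (L-1), (i:ℝ) * ((min (L-i) N : ℕ):ℝ) / ((N:ℕ):ℝ)
      = (i:ℝ) * ((min (L-i) L : ℕ):ℝ) / ((N:ℕ):ℝ) := by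
    intro i hi
    have : min (L-i) N = min (L-i) L := by omega
    rw [this]
  rw [Finset.sum_congr rfl key,
    show (∑ i ∈ Icc 1 (L-1), (i:ℝ) * ((min (L-i) L : ℕ):ℝ) / ((N:ℕ):ℝ))
      = (∑ i ∈ Icc 1 (L-1), (i:ℝ) * ((min (L-i) L : ℕ):ℝ)) / (N:ℝ) from (Finset.sum_div _ _ _).symm,
    S_aux L L le_rfl]
  simp only [Nat.sub_self, Nat.cast_zero]
  field_simp
  ring

noncomputable def Afun (Nc : ℕ → ℕ) (L : ℕ) : ℝ :=
  (2/3) * (1 + (1 - (Nc L:ℝ)/(L:ℝ)) + (1 - (Nc L:ℝ)/(L:ℝ))^2 - 1/(L:ℝ)^2)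

noncomputable def Bfun (Nc : ℕ → ℕ) (L : ℕ) : ℝ :=
  (2/3) * (1/((Nc L:ℝ)/(L:ℝ))) * (1 - 1/(L:ℝ)^2)


set_option maxHeartbeats 1000000 in
/-- Let `β̄ ∈ (0,∞)` and let `Nc : ℕ → ℕ` satisfy `Nc L / L → β̄` as
`L → ∞`.  Then `(4/L²)·∑_{i=1}^{L−1} i·min(L−i, Nc L)/Nc L → ν(β̄)`, where
`ν(β̄) = (2/3)(3 − 3β̄ + β̄²)` for `β̄ ≤ 1` and `ν(β̄) = 2/(3β̄)` for `β̄ > 1`. -/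
theorem self_interference_combinatorial_limit
    (βbar : ℝ) (hβ : 0 < βbar)
    (Nc : ℕ → ℕ)
    (hNc : Tendsto (fun L : ℕ => (Nc L : ℝ) / (L : ℝ)) atTop (nhds βbar)) :
    Tendsto (fun L : ℕ =>
        (4 / (L : ℝ) ^ 2) *
          ∑ i ∈ Finset.Icc 1 (L - 1),
            (i : ℝ) * ((min (L - i) (Nc L) : ℕ) : ℝ) / ((Nc L : ℕ) : ℝ))
      atTop (nhds (nuFactor βbar)) := by
  have hl : Tendsto (fun L : ℕ => (L:ℝ)) atTop atTop := tendsto_natCast_atTop_atTop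
  have hl2 : Tendsto (fun L : ℕ => 1/(L:ℝ)^2) atTop (nhds 0) := by
    simpa [Function.comp_def, one_div] using
      (tendsto_inv_atTop_zero.comp ((tendsto_pow_atTop two_ne_zero).comp hl))
  have h1 : Tendsto (fun L : ℕ => 1 - (Nc L:ℝ)/(L:ℝ)) atTop (nhds (1 - βbar)) :=
    tendsto_const_nhds.sub hNc
  have hA : Tendsto (Afun Nc) atTop (nhds ((2/3) * (1 + (1 - βbar) + (1 - βbar)^2 - 0))) :=
    (((tendsto_const_nhds.add h1).add (h1.pow 2)).sub hl2).const_mul (2/3)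
  have hB : Tendsto (Bfun Nc) atTop (nhds ((2/3) * (1/βbar) * (1 - 0))) :=
    ((tendsto_const_nhds.div hNc hβ.ne').const_mul (2/3)).mul (tendsto_const_nhds.sub hl2)
  have hev1 : ∀ᶠ L : ℕ in atTop, 1 ≤ L := eventually_ge_atTop 1
  have hevpos : ∀ᶠ L : ℕ in atTop, βbar/2 < (Nc L:ℝ)/(L:ℝ) :=
    hNc.eventually (eventually_gt_nhds (by linarith))
  have hNpos : ∀ᶠ L : ℕ in atTop, 1 ≤ Nc L := by
    filter_upwards [hev1, hevpos] with L h1' h2'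
    by_contra h
    push_neg at h
    have h0 : Nc L = 0 := by omega
    rw [h0] at h2'
    simp at h2'
    linarith
  rcases lt_trichotomy βbar 1 with hlt | hbeq | hgt
  · -- βbar < 1
    have hevlt : ∀ᶠ L : ℕ in atTop, (Nc L:ℝ)/(L:ℝ) < 1 :=
      hNc.eventually (eventually_lt_nhds hlt)
    have hval : nuFactor βbar = (2/3) * (1 + (1 - βbar) + (1 - βbar)^2 - 0) := by
      rw [nuFactor, if_pos hlt.le]; ring
    rw [hval]
    refine hA.congr' ?_
    filter_upwards [hev1, hNpos, hevlt] with L hL hN hu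
    have hl0 : (0:ℝ) < (L:ℝ) := by positivity
    have hNL : Nc L ≤ L := by
      by_contra h
      push_neg at h
      have : (1:ℝ) < (Nc L:ℝ)/(L:ℝ) := by
        rw [lt_div_iff₀ hl0]
        exact_mod_cast by omega
      linarith
    exact (EA_eq L (Nc L) hN hNL).symm
  · -- βbar = 1
    subst hbeq
    have hval : nuFactor 1 = (2/3 : ℝ) := by
      rw [nuFactor, if_pos le_rfl]; norm_num
    rw [hval]
    have hA' : Tendsto (Afun Nc) atTop (nhds (2/3)) := by
      have h : ((2:ℝ)/3) * (1 + (1 - 1) + (1 - 1)^2 - 0) = 2/3 := by norm_num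
      exact h ▸ hA
    have hB' : Tendsto (Bfun Nc) atTop (nhds (2/3)) := by
      have h : ((2:ℝ)/3) * (1/1) * (1 - 0) = 2/3 := by norm_num
      exact h ▸ hB
    have hmin : Tendsto (fun L : ℕ => min (Afun Nc L) (Bfun Nc L)) atTop (nhds (2/3)) := by
      have := hA'.min hB'
      rwa [min_self] at this
    have hmax : Tendsto (fun L : ℕ => max (Afun Nc L) (Bfun Nc L)) atTop (nhds (2/3)) := by
      have := hA'.max hB'
      rwa [max_self] at this
    have hEor : ∀ᶠ L : ℕ in atTop,
        (4 / (L : ℝ) ^ 2) * (∑ i ∈ Finset.Icc 1 (L - 1),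
            (i : ℝ) * ((min (L - i) (Nc L) : ℕ) : ℝ) / ((Nc L : ℕ) : ℝ))
          = Afun Nc L
        ∨ (4 / (L : ℝ) ^ 2) * (∑ i ∈ Finset.Icc 1 (L - 1),
            (i : ℝ) * ((min (L - i) (Nc L) : ℕ) : ℝ) / ((Nc L : ℕ) : ℝ))
          = Bfun Nc L := by
      filter_upwards [hev1, hNpos] with L hL hN
      rcases le_or_gt (Nc L) L with h | h
      · exact Or.inl (EA_eq L (Nc L) hN h)
      · exact Or.inr (EB_eq L (Nc L) hL h.le)
    refine tendsto_of_tendsto_of_tendsto_of_le_of_le' hmin hmax ?_ ?_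
    · filter_upwards [hEor] with L h
      rcases h with h | h <;> rw [h]
      · exact min_le_left _ _
      · exact min_le_right _ _
    · filter_upwards [hEor] with L h
      rcases h with h | h <;> rw [h]
      · exact le_max_left _ _
      · exact le_max_right _ _
  · -- 1 < βbar
    have hevgt : ∀ᶠ L : ℕ in atTop, (1:ℝ) < (Nc L:ℝ)/(L:ℝ) :=
      hNc.eventually (eventually_gt_nhds hgt)
    have hval : nuFactor βbar = (2/3) * (1/βbar) * (1 - 0) := by
      rw [nuFactor, if_neg (not_le.mpr hgt)]
      field_simp
      norm_num
    rw [hval]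
    refine hB.congr' ?_
    filter_upwards [hev1, hevgt] with L hL hu
    have hl0 : (0:ℝ) < (L:ℝ) := by positivity
    have hNL : L ≤ Nc L := by
      by_contra h
      push_neg at h
      have : (Nc L:ℝ)/(L:ℝ) < 1 := by
        rw [div_lt_one hl0]
        exact_mod_cast h
      linarith
    exact (EB_eq L (Nc L) hL hNL).symm
end

section
/- Let f satisfy the efficiency-function hypotheses, and for Γ > 0 let γ*(Γ) denote the unique solution in (0, Γ) of f'(γ)γ(1 − γ/Γ) = f(γ). Then: (i) γ*(·) is nondecreasing, i.e. 0 < Γ₁ ≤ Γ₂ implies γ*(Γ₁) ≤ γ*(Γ₂); and (ii) if moreover there exists γ > 0 with f(γ)/f'(γ) > γ, then the equation f'(γ)·γ = f(γ) has a unique solution γ̂ > 0 and γ*(Γ) → γ̂ as Γ → ∞, with γ*(Γ) ≤ γ̂ for every Γ > 0. -/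
open Filter Set

/-- Under the efficiency-function hypotheses, for `Γ > 0` let `γ*(Γ)`
denote the unique solution in `(0, Γ)` of `f'(γ)γ(1 − γ/Γ) = f(γ)`.  Then:
(i) `γ*` is nondecreasing on `(0,∞)`;
(ii) if moreover there exists `γ > 0` with `f γ / f' γ > γ`, then the equation
`f'(γ)·γ = f(γ)` has a unique solution `γ̂ > 0`, `γ*(Γ) → γ̂` as `Γ → ∞`, and
`γ*(Γ) ≤ γ̂` for every `Γ > 0`. -/
theorem target_sinr_monotone_and_limit
    (f : ℝ → ℝ)
    (hf : ContDiff ℝ 1 f)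
    (hf0 : f 0 = 0)
    (hf'0 : deriv f 0 = 0)
    (hf'pos : ∀ γ : ℝ, 0 < γ → 0 < deriv f γ)
    (hflim : Tendsto f atTop (nhds 1))
    (hconv : ConvexOn ℝ (Set.Ioi 0) (fun γ => f γ / deriv f γ))
    (hmono : StrictMonoOn (fun γ => f γ / deriv f γ) (Set.Ioi 0))
    (hlimsup : Filter.limsup (fun γ => f γ / (γ * deriv f γ))
        (nhdsWithin 0 (Set.Ioi 0)) < 1)
    (γstar : ℝ → ℝ)
    (hγstar : ∀ Γ : ℝ, 0 < Γ →
      γstar Γ ∈ Set.Ioo 0 Γ ∧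
      deriv f (γstar Γ) * γstar Γ * (1 - γstar Γ / Γ) = f (γstar Γ) ∧
      (∀ γ ∈ Set.Ioo 0 Γ, deriv f γ * γ * (1 - γ / Γ) = f γ → γ = γstar Γ)) :
    (∀ Γ₁ Γ₂ : ℝ, 0 < Γ₁ → Γ₁ ≤ Γ₂ → γstar Γ₁ ≤ γstar Γ₂) ∧
    ((∃ γ : ℝ, 0 < γ ∧ γ < f γ / deriv f γ) →
      ∃ γhat : ℝ, 0 < γhat ∧ deriv f γhat * γhat = f γhat ∧
        (∀ γ : ℝ, 0 < γ → deriv f γ * γ = f γ → γ = γhat) ∧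
        Tendsto γstar atTop (nhds γhat) ∧
        (∀ Γ : ℝ, 0 < Γ → γstar Γ ≤ γhat)) := by
  have hfc : Continuous f := hf.continuous
  have hdc : Continuous (deriv f) := hf.continuous_deriv le_rfl
  -- positivity of f on (0,∞)
  have fmono : StrictMonoOn f (Set.Ici 0) := by
    apply strictMonoOn_of_deriv_pos (convex_Ici 0) hfc.continuousOn
    intro x hx
    rw [interior_Ici] at hx
    exact hf'pos x hx
  have fpos : ∀ γ : ℝ, 0 < γ → 0 < f γ := by
    intro γ hγ
    have := fmono (self_mem_Ici) (mem_Ici.2 hγ.le) hγ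
    rwa [hf0] at this
  -- key sign lemma: to the right of γstar Γ (within (0,Γ)) the defining expression is < f
  have keysign : ∀ Γ : ℝ, 0 < Γ → ∀ γ : ℝ, γstar Γ < γ → γ < Γ →
      deriv f γ * γ * (1 - γ / Γ) < f γ := by
    intro Γ hΓ γ hlow hhigh
    obtain ⟨⟨hs0, hsΓ⟩, -, huniq⟩ := hγstar Γ hΓ
    by_contra hcon
    push_neg at hcon
    set H : ℝ → ℝ := fun x => deriv f x * x * (1 - x / Γ) - f x with hH
    have hHc : Continuous H :=
      ((hdc.mul continuous_id).mul (continuous_const.sub (continuous_id.div_const Γ))).sub hfc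
    have hHΓ : H Γ < 0 := by
      have hΓΓ : (Γ : ℝ) / Γ = 1 := div_self hΓ.ne'
      have : H Γ = -f Γ := by simp [hH, hΓΓ]
      rw [this]
      linarith [fpos Γ hΓ]
    have hHγ : 0 ≤ H γ := sub_nonneg.2 hcon
    have h0mem : (0:ℝ) ∈ Set.Icc (H Γ) (H γ) := ⟨hHΓ.le, hHγ⟩
    obtain ⟨z, hzmem, hz0⟩ := intermediate_value_Icc' hhigh.le hHc.continuousOn h0mem
    have hzΓ : z ≠ Γ := by
      rintro rfl
      rw [hz0] at hHΓ
      exact lt_irrefl 0 hHΓ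
    have hzlt : z < Γ := lt_of_le_of_ne hzmem.2 hzΓ
    have hzpos : 0 < z := lt_of_lt_of_le (hs0.trans hlow) hzmem.1
    have hz0' : deriv f z * z * (1 - z / Γ) = f z := by
      have : deriv f z * z * (1 - z / Γ) - f z = 0 := hz0
      linarith
    have hzeq := huniq z ⟨hzpos, hzlt⟩ hz0'
    have : γ ≤ z := hzmem.1
    linarith
  -- Part (i)
  have part1 : ∀ Γ₁ Γ₂ : ℝ, 0 < Γ₁ → Γ₁ ≤ Γ₂ → γstar Γ₁ ≤ γstar Γ₂ := by
    intro Γ₁ Γ₂ h1 h12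
    have h2 : 0 < Γ₂ := lt_of_lt_of_le h1 h12
    obtain ⟨⟨hp, hlt⟩, heq, -⟩ := hγstar Γ₁ h1
    by_contra hcon
    push_neg at hcon
    have hk := keysign Γ₂ h2 (γstar Γ₁) hcon (lt_of_lt_of_le hlt h12)
    have hd : 0 < deriv f (γstar Γ₁) * γstar Γ₁ := mul_pos (hf'pos _ hp) hp
    have hdiv : γstar Γ₁ / Γ₂ ≤ γstar Γ₁ / Γ₁ :=
      div_le_div_of_nonneg_left hp.le h1 h12
    have hexp : deriv f (γstar Γ₁) * γstar Γ₁ * (1 - γstar Γ₁ / Γ₁) ≤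
        deriv f (γstar Γ₁) * γstar Γ₁ * (1 - γstar Γ₁ / Γ₂) :=
      mul_le_mul_of_nonneg_left (by linarith) hd.le
    linarith
  refine ⟨part1, ?_⟩
  rintro ⟨γ₀, hγ₀pos, hγ₀⟩
  set g : ℝ → ℝ := fun γ => f γ / deriv f γ with hgdef
  have hγ₀' : γ₀ < g γ₀ := hγ₀
  -- at every γstar Γ we have g < id
  have hqlt : ∀ Γ : ℝ, 0 < Γ → g (γstar Γ) < γstar Γ := by
    intro Γ hΓ
    obtain ⟨⟨h0, hΓ'⟩, heq, -⟩ := hγstar Γ hΓ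
    have hd := hf'pos _ h0
    have hge : g (γstar Γ) = γstar Γ * (1 - γstar Γ / Γ) := by
      show f (γstar Γ) / deriv f (γstar Γ) = _
      rw [← heq, mul_assoc, mul_div_cancel_left₀ _ hd.ne']
    rw [hge]
    have h1 : 0 < γstar Γ / Γ := div_pos h0 hΓ
    nlinarith [mul_pos h0 h1]
  have hgc : ContinuousOn g (Set.Ioi 0) :=
    hfc.continuousOn.div hdc.continuousOn (fun x hx => (hf'pos x hx).ne')
  -- existence of γhat
  obtain ⟨⟨hq0, hqγ₀⟩, -, -⟩ := hγstar γ₀ hγ₀pos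
  have hq : g (γstar γ₀) < γstar γ₀ := hqlt γ₀ hγ₀pos
  have hIcc : Set.Icc (γstar γ₀) γ₀ ⊆ Set.Ioi 0 := fun x hx => lt_of_lt_of_le hq0 hx.1
  have hhc : ContinuousOn (fun x => x - g x) (Set.Icc (γstar γ₀) γ₀) :=
    continuousOn_id.sub (hgc.mono hIcc)
  have h0mem : (0:ℝ) ∈ Set.Icc (γ₀ - g γ₀) (γstar γ₀ - g (γstar γ₀)) :=
    ⟨by linarith, by linarith⟩
  obtain ⟨γhat, hmem, hzero⟩ := intermediate_value_Icc' hqγ₀.le hhc h0mem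
  have hγhat0 : 0 < γhat := lt_of_lt_of_le hq0 hmem.1
  have hgγhat : g γhat = γhat := by
    have : γhat - g γhat = 0 := hzero
    linarith
  -- claim A: to the right of γhat, g > id
  obtain ⟨⟨hr0, hrh⟩, -, -⟩ := hγstar γhat hγhat0
  have hrg : g (γstar γhat) < γstar γhat := hqlt γhat hγhat0
  have claimA : ∀ γ : ℝ, γhat < γ → γ < g γ := by
    intro γ hγ
    have hs := hconv.slope_mono_adjacent (Set.mem_Ioi.2 hr0)
      (Set.mem_Ioi.2 (hγhat0.trans hγ)) hrh hγ
    rw [hgγhat] at hs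
    have h1 : (1:ℝ) < (γhat - g (γstar γhat)) / (γhat - γstar γhat) :=
      (one_lt_div (by linarith)).2 (by linarith)
    have h2 : (1:ℝ) < (g γ - γhat) / (γ - γhat) := lt_of_lt_of_le h1 hs
    have := (one_lt_div (by linarith : (0:ℝ) < γ - γhat)).1 h2
    linarith
  -- claim B: to the left of γhat (and > 0), g < id
  have claimB : ∀ γ : ℝ, 0 < γ → γ < γhat → g γ < γ := by
    intro γ h0 hγ
    obtain ⟨⟨hs0, hsγ⟩, -, -⟩ := hγstar γ h0
    have hsg : g (γstar γ) < γstar γ := hqlt γ h0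
    have hs := hconv.slope_mono_adjacent (Set.mem_Ioi.2 hs0)
      (Set.mem_Ioi.2 hγhat0) hsγ hγ
    rw [hgγhat] at hs
    by_contra hcon
    push_neg at hcon
    have h1 : (1:ℝ) < (g γ - g (γstar γ)) / (γ - γstar γ) :=
      (one_lt_div (by linarith)).2 (by linarith)
    have h2 : (γhat - g γ) / (γhat - γ) ≤ 1 :=
      (div_le_one (by linarith)).2 (by linarith)
    linarith [lt_of_lt_of_le h1 hs]
  -- uniqueness
  have huniq2 : ∀ γ : ℝ, 0 < γ → deriv f γ * γ = f γ → γ = γhat := by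
    intro γ h0 heq
    have hd := hf'pos γ h0
    have hgγ : g γ = γ := by
      show f γ / deriv f γ = γ
      rw [← heq, mul_div_cancel_left₀ _ hd.ne']
    rcases lt_trichotomy γ γhat with h | h | h
    · have := claimB γ h0 h
      rw [hgγ] at this
      exact absurd this (lt_irrefl γ)
    · exact h
    · have := claimA γ h
      rw [hgγ] at this
      exact absurd this (lt_irrefl γ)
  -- γstar Γ ≤ γhat
  have hle : ∀ Γ : ℝ, 0 < Γ → γstar Γ ≤ γhat := by
    intro Γ hΓ
    by_contra hcon
    push_neg at hcon
    have h1 := claimA _ hcon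
    have h2 := hqlt Γ hΓ
    linarith
  -- the equation at γhat
  have heqhat : deriv f γhat * γhat = f γhat := by
    have hd := hf'pos γhat hγhat0
    have : f γhat / deriv f γhat = γhat := hgγhat
    field_simp at this
    linarith [this]
  -- tendsto
  have htend : Tendsto γstar atTop (nhds γhat) := by
    rw [Metric.tendsto_atTop]
    intro ε hε
    set p : ℝ := γhat - min ε γhat / 2 with hpdef
    have hminpos : 0 < min ε γhat := lt_min hε hγhat0
    have hminγ : min ε γhat ≤ γhat := min_le_right _ _
    have hminε : min ε γhat ≤ ε := min_le_left _ _
    have hp0 : 0 < p := by rw [hpdef]; linarith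
    have hpγ : p < γhat := by rw [hpdef]; linarith
    have hδ : 0 < p - g p := sub_pos.2 (claimB p hp0 hpγ)
    refine ⟨max (p ^ 2 / (p - g p)) γhat + 1, fun Γ hΓ => ?_⟩
    have hΓγhat : γhat < Γ := lt_of_lt_of_le (by linarith [le_max_right (p ^ 2 / (p - g p)) γhat]) hΓ
    have hΓδ : p ^ 2 / (p - g p) < Γ :=
      lt_of_lt_of_le (by linarith [le_max_left (p ^ 2 / (p - g p)) γhat]) hΓ
    have hΓpos : 0 < Γ := hγhat0.trans hΓγhat
    have hpΓ : p < Γ := hpγ.trans hΓγhat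
    have hple : p ≤ γstar Γ := by
      by_contra hcon
      push_neg at hcon
      have hk := keysign Γ hΓpos p hcon hpΓ
      have hd := hf'pos p hp0
      have hgp : f p = g p * deriv f p := by
        rw [hgdef]
        field_simp
      have h1 : p * (1 - p / Γ) < g p := by
        have h2 : deriv f p * (p * (1 - p / Γ)) < deriv f p * g p := by
          calc deriv f p * (p * (1 - p / Γ)) = deriv f p * p * (1 - p / Γ) := by ring
          _ < f p := hk
          _ = deriv f p * g p := by rw [hgp]; ring
        exact lt_of_mul_lt_mul_left h2 hd.le
      have hid : p * (1 - p / Γ) = p - p ^ 2 / Γ := by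
        field_simp
      rw [hid] at h1
      have h3 : p ^ 2 < Γ * (p - g p) := (div_lt_iff₀ hδ).1 hΓδ
      have h4 : p ^ 2 / Γ < p - g p := (div_lt_iff₀ hΓpos).2 (by linarith)
      linarith
    have hub := hle Γ hΓpos
    rw [Real.dist_eq, abs_lt]
    constructor
    · rw [hpdef] at hple; linarith
    · linarith [hε]
  exact ⟨γhat, hγhat0, heqhat, huniq2, htend, hle⟩
end

section
/- Let f : [0,∞) → ℝ be differentiable, let c > 0 and σ² > 0, and consider the map F(γ) = f(γ)·(1 − cγ)/(σ²·γ) on (0, 1/c) (the per-user utility f(γ)/q̄(γ) under the equilibrium power law q̄(γ) = σ²γ/(1 − cγ)). Then γ₀ ∈ (0, 1/c) is a critical point of F (F'(γ₀) = 0) if and only if f'(γ₀)·γ₀·(1 − cγ₀) = f(γ₀). In particular, under the efficiency-function hypotheses, with c = (K − 1 + ν(β̄))/N < 1/γ̂ the equation has the unique solution γ_opt = γ*(N/(K − 1 + ν(β̄))) in (0, 1/c), and γ_opt ≤ γ*(Γ) ≤ γ̂ for every Γ ≥ N/(K − 1 + ν(β̄)), where γ*(Γ) is the unique solution in (0,Γ)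 of f'(γ)γ(1 − γ/Γ) = f(γ) and γ̂ solves f'(γ)γ = f(γ). -/
open Filter Set

lemma aux_deriv_iff (g : ℝ → ℝ) (hg : Differentiable ℝ g) (c' σ' : ℝ)
    (hσ' : 0 < σ') (γ0 : ℝ) (h0 : 0 < γ0) :
    deriv (fun γ : ℝ => g γ * (1 - c' * γ) / (σ' * γ)) γ0 = 0 ↔
      deriv g γ0 * γ0 * (1 - c' * γ0) = g γ0 := by
  have hγne : γ0 ≠ 0 := ne_of_gt h0
  have hσne : σ' ≠ 0 := ne_of_gt hσ'
  have hnum : HasDerivAt (fun γ : ℝ => g γ * (1 - c' * γ))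
      (deriv g γ0 * (1 - c' * γ0) + g γ0 * (-(c' * 1))) γ0 :=
    ((hg γ0).hasDerivAt).mul (((hasDerivAt_id γ0).const_mul c').const_sub 1)
  have hden : HasDerivAt (fun γ : ℝ => σ' * γ) (σ' * 1) γ0 :=
    (hasDerivAt_id γ0).const_mul σ'
  have hdne : σ' * γ0 ≠ 0 := mul_ne_zero hσne hγne
  have hF := hnum.div hden hdne
  rw [show deriv (fun γ : ℝ => g γ * (1 - c' * γ) / (σ' * γ)) γ0 = deriv ((fun γ : ℝ => g γ * (1 - c' * γ)) / fun γ : ℝ => σ' * γ) γ0 from rfl, hF.deriv, div_eq_zero_iff]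
  have hpow : (σ' * γ0) ^ 2 ≠ 0 := pow_ne_zero _ hdne
  constructor
  · rintro (h | h)
    · have key : (deriv g γ0 * (1 - c' * γ0) + g γ0 * (-(c' * 1))) * (σ' * γ0)
          - g γ0 * (1 - c' * γ0) * (σ' * 1)
          = σ' * (deriv g γ0 * γ0 * (1 - c' * γ0) - g γ0) := by ring
      rw [key] at h
      rcases mul_eq_zero.mp h with h' | h'
      · exact absurd h' hσne
      · linarith
    · exact absurd h hpow
  · intro h
    left
    linear_combination σ' * h

/-- Key lemma: to the right of `γhat`, the map `γ ↦ f γ / f' γ` lies strictly above the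
diagonal.  Proved by contradiction using uniqueness of the solution `γstar Γ` for a large
`Γ`: otherwise the intermediate value theorem would produce two distinct solutions. -/
lemma no_cross (f : ℝ → ℝ) (hf : ContDiff ℝ 1 f) (hf0 : f 0 = 0)
    (hf'pos : ∀ γ : ℝ, 0 < γ → 0 < deriv f γ)
    (hmono : StrictMonoOn (fun γ => f γ / deriv f γ) (Set.Ioi 0))
    (γstar : ℝ → ℝ)
    (hγstar : ∀ Γ : ℝ, 0 < Γ →
      γstar Γ ∈ Set.Ioo 0 Γ ∧
      deriv f (γstar Γ) * γstar Γ * (1 - γstar Γ / Γ) = f (γstar Γ) ∧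
      (∀ γ ∈ Set.Ioo 0 Γ, deriv f γ * γ * (1 - γ / Γ) = f γ → γ = γstar Γ))
    (γhat : ℝ) (hγhat : 0 < γhat ∧ deriv f γhat * γhat = f γhat ∧
      (∀ γ : ℝ, 0 < γ → deriv f γ * γ = f γ → γ = γhat)) :
    ∀ γ : ℝ, γhat < γ → γ < f γ / deriv f γ := by
  obtain ⟨hγhat0, hγhateq, hγhatuniq⟩ := hγhat
  have hfpos : ∀ γ : ℝ, 0 < γ → 0 < f γ := by
    intro γ hγ
    have hsm : StrictMonoOn f (Set.Ici 0) := by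
      apply strictMonoOn_of_deriv_pos (convex_Ici 0) hf.continuous.continuousOn
      intro x hx
      rw [interior_Ici] at hx
      exact hf'pos x hx
    have := hsm Set.self_mem_Ici (Set.mem_Ici.mpr hγ.le) hγ
    rwa [hf0] at this
  have hcont : ContinuousOn (fun γ => f γ / deriv f γ) (Set.Ioi 0) :=
    hf.continuous.continuousOn.div ((hf.continuous_deriv le_rfl).continuousOn)
      (fun x hx => ne_of_gt (hf'pos x hx))
  have hhat : f γhat / deriv f γhat = γhat := by
    rw [div_eq_iff (ne_of_gt (hf'pos γhat hγhat0))]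
    linarith [hγhateq]
  intro γ₂ hγ₂
  by_contra hcon
  push_neg at hcon
  have hγ₂0 : 0 < γ₂ := lt_trans hγhat0 hγ₂
  have hf'2 : 0 < deriv f γ₂ := hf'pos γ₂ hγ₂0
  have hne : f γ₂ / deriv f γ₂ ≠ γ₂ := by
    intro he
    rw [div_eq_iff (ne_of_gt hf'2)] at he
    have := hγhatuniq γ₂ hγ₂0 (by linarith)
    linarith
  have hlt : f γ₂ / deriv f γ₂ < γ₂ := lt_of_le_of_ne hcon hne
  have hh2pos : 0 < f γ₂ / deriv f γ₂ := div_pos (hfpos _ hγ₂0) hf'2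
  -- choose a large Γ
  obtain ⟨Γ, hΓγ₂, hΓpos, hΓd⟩ :
      ∃ Γ : ℝ, γ₂ + 1 ≤ Γ ∧ 0 < Γ ∧ γ₂ ^ 2 / Γ < γ₂ - f γ₂ / deriv f γ₂ := by
    have hdpos : 0 < γ₂ - f γ₂ / deriv f γ₂ := by linarith
    refine ⟨2 * γ₂ ^ 2 / (γ₂ - f γ₂ / deriv f γ₂) + γ₂ + 1, ?_, ?_, ?_⟩
    · have : 0 ≤ 2 * γ₂ ^ 2 / (γ₂ - f γ₂ / deriv f γ₂) := by positivity
      linarith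
    · have : 0 ≤ 2 * γ₂ ^ 2 / (γ₂ - f γ₂ / deriv f γ₂) := by positivity
      linarith
    · have hΓp : 0 < 2 * γ₂ ^ 2 / (γ₂ - f γ₂ / deriv f γ₂) + γ₂ + 1 := by positivity
      rw [div_lt_iff₀ hΓp]
      have hexp : (γ₂ - f γ₂ / deriv f γ₂) * (2 * γ₂ ^ 2 / (γ₂ - f γ₂ / deriv f γ₂))
          = 2 * γ₂ ^ 2 := by
        rw [mul_comm]
        exact div_mul_cancel₀ _ (ne_of_gt hdpos)
      nlinarith [mul_pos hdpos (show (0:ℝ) < γ₂ + 1 by linarith)]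
  -- choose γ₃ close to Γ
  obtain ⟨γ₃, hγ₂γ₃, hγ₃Γ, hγ₃small⟩ :
      ∃ γ₃ : ℝ, γ₂ < γ₃ ∧ γ₃ < Γ ∧ Γ - γ₃ ≤ (f γ₂ / deriv f γ₂) / 2 := by
    refine ⟨Γ - min (f γ₂ / deriv f γ₂) (Γ - γ₂) / 2, ?_, ?_, ?_⟩
    · have h1 := min_le_right (f γ₂ / deriv f γ₂) (Γ - γ₂)
      have h2 := lt_min hh2pos (show (0:ℝ) < Γ - γ₂ by linarith)
      linarith
    · have h2 := lt_min hh2pos (show (0:ℝ) < Γ - γ₂ by linarith)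
      linarith
    · have h1 := min_le_left (f γ₂ / deriv f γ₂) (Γ - γ₂)
      linarith
  have hγ₃0 : 0 < γ₃ := lt_trans hγ₂0 hγ₂γ₃
  have hψcont : ContinuousOn (fun γ => f γ / deriv f γ - γ * (1 - γ / Γ)) (Set.Ioi 0) := by
    apply hcont.sub
    exact (continuous_id.mul (continuous_const.sub (continuous_id.div_const Γ))).continuousOn
  -- values of ψ
  have hψhatpos : 0 < f γhat / deriv f γhat - γhat * (1 - γhat / Γ) := by
    rw [hhat]
    have e : γhat * (1 - γhat / Γ) = γhat - γhat ^ 2 / Γ := by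
      field_simp
    rw [e]
    have : 0 < γhat ^ 2 / Γ := by positivity
    linarith
  have hψ2 : f γ₂ / deriv f γ₂ - γ₂ * (1 - γ₂ / Γ) < 0 := by
    have e : γ₂ * (1 - γ₂ / Γ) = γ₂ - γ₂ ^ 2 / Γ := by
      field_simp
      try ring
    rw [e]
    linarith
  have hψ3 : 0 < f γ₃ / deriv f γ₃ - γ₃ * (1 - γ₃ / Γ) := by
    have hmono' : f γ₂ / deriv f γ₂ < f γ₃ / deriv f γ₃ :=
      hmono (Set.mem_Ioi.mpr hγ₂0) (Set.mem_Ioi.mpr hγ₃0) hγ₂γ₃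
    have e : γ₃ * (1 - γ₃ / Γ) = γ₃ * (Γ - γ₃) / Γ := by
      field_simp
      try ring
    have hle : γ₃ * (Γ - γ₃) / Γ ≤ Γ - γ₃ := by
      rw [div_le_iff₀ hΓpos]
      nlinarith [sq_nonneg (Γ - γ₃)]
    rw [e]
    linarith
  -- any zero of ψ in (0, Γ) equals γstar Γ
  have hkey : ∀ z : ℝ, z ∈ Set.Ioo 0 Γ →
      f z / deriv f z - z * (1 - z / Γ) = 0 → z = γstar Γ := by
    intro z hzmem hzeq
    apply (hγstar Γ hΓpos).2.2 z hzmem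
    have hz' : f z / deriv f z = z * (1 - z / Γ) := by linarith
    rw [div_eq_iff (ne_of_gt (hf'pos z hzmem.1))] at hz'
    rw [hz']; ring
  -- two zeros by IVT
  have hIVT1 : (0:ℝ) ∈ (fun γ => f γ / deriv f γ - γ * (1 - γ / Γ)) '' Set.Ioo γhat γ₂ := by
    apply intermediate_value_Ioo' hγ₂.le
      (hψcont.mono (fun x hx => lt_of_lt_of_le hγhat0 hx.1))
    exact ⟨hψ2, hψhatpos⟩
  obtain ⟨z₁, hz₁mem, hz₁⟩ := hIVT1
  have hIVT2 : (0:ℝ) ∈ (fun γ => f γ / deriv f γ - γ * (1 - γ / Γ)) '' Set.Ioo γ₂ γ₃ := by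
    apply intermediate_value_Ioo hγ₂γ₃.le
      (hψcont.mono (fun x hx => lt_of_lt_of_le hγ₂0 hx.1))
    exact ⟨hψ2, hψ3⟩
  obtain ⟨z₂, hz₂mem, hz₂⟩ := hIVT2
  have hz₁0 : 0 < z₁ := lt_trans hγhat0 hz₁mem.1
  have hz₂0 : 0 < z₂ := lt_trans hγ₂0 hz₂mem.1
  have e₁ := hkey z₁ ⟨hz₁0, by linarith [hz₁mem.2]⟩ hz₁
  have e₂ := hkey z₂ ⟨hz₂0, by linarith [hz₂mem.2]⟩ hz₂
  have hzz : z₁ < z₂ := lt_trans hz₁mem.2 hz₂mem.1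
  rw [e₁, e₂] at hzz
  exact lt_irrefl _ hzz

/-- For differentiable `g`, `c > 0`, `σ² > 0`, a point
`γ₀ ∈ (0, 1/c)` is a critical point of `F γ = g γ (1 − cγ)/(σ² γ)` iff
`g'(γ₀)γ₀(1 − cγ₀) = g(γ₀)`.  In particular, under the efficiency-function hypotheses
on `f`, with `c = (K − 1 + ν(β̄))/N < 1/γ̂`, the equation has the unique solution
`γ_opt = γ*(N/(K − 1 + ν(β̄)))` in `(0, 1/c)`, and `γ_opt ≤ γ*(Γ) ≤ γ̂` for every
`Γ ≥ N/(K − 1 + ν(β̄))`. -/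
theorem social_optimum_characterization
    (f : ℝ → ℝ)
    (hf : ContDiff ℝ 1 f)
    (hf0 : f 0 = 0)
    (hf'0 : deriv f 0 = 0)
    (hf'pos : ∀ γ : ℝ, 0 < γ → 0 < deriv f γ)
    (hflim : Tendsto f atTop (nhds 1))
    (hconv : ConvexOn ℝ (Set.Ioi 0) (fun γ => f γ / deriv f γ))
    (hmono : StrictMonoOn (fun γ => f γ / deriv f γ) (Set.Ioi 0))
    (hlimsup : Filter.limsup (fun γ => f γ / (γ * deriv f γ))
        (nhdsWithin 0 (Set.Ioi 0)) < 1)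
    (hexists : ∃ γ : ℝ, 0 < γ ∧ γ < f γ / deriv f γ)
    (γstar : ℝ → ℝ)
    (hγstar : ∀ Γ : ℝ, 0 < Γ →
      γstar Γ ∈ Set.Ioo 0 Γ ∧
      deriv f (γstar Γ) * γstar Γ * (1 - γstar Γ / Γ) = f (γstar Γ) ∧
      (∀ γ ∈ Set.Ioo 0 Γ, deriv f γ * γ * (1 - γ / Γ) = f γ → γ = γstar Γ))
    (γhat : ℝ) (hγhat : 0 < γhat ∧ deriv f γhat * γhat = f γhat ∧
      (∀ γ : ℝ, 0 < γ → deriv f γ * γ = f γ → γ = γhat))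
    (K N : ℕ) (hK : 2 ≤ K) (hN : 1 ≤ N)
    (βbar : ℝ) (hβ : 0 < βbar)
    (σ2 : ℝ) (hσ2 : 0 < σ2)
    (c : ℝ) (hc : c = ((K : ℝ) - 1 + nuFactor βbar) / (N : ℝ))
    (hcγhat : c < 1 / γhat) :
    (∀ g : ℝ → ℝ, Differentiable ℝ g → ∀ c' σ' : ℝ, 0 < c' → 0 < σ' →
      ∀ γ0 ∈ Set.Ioo 0 (1 / c'),
        (deriv (fun γ : ℝ => g γ * (1 - c' * γ) / (σ' * γ)) γ0 = 0 ↔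
          deriv g γ0 * γ0 * (1 - c' * γ0) = g γ0)) ∧
    (γstar (1 / c) ∈ Set.Ioo 0 (1 / c) ∧
      deriv f (γstar (1 / c)) * γstar (1 / c) * (1 - c * γstar (1 / c)) =
        f (γstar (1 / c)) ∧
      (∀ γ ∈ Set.Ioo 0 (1 / c),
        deriv f γ * γ * (1 - c * γ) = f γ → γ = γstar (1 / c)) ∧
      (∀ Γ : ℝ, 1 / c ≤ Γ → γstar (1 / c) ≤ γstar Γ ∧ γstar Γ ≤ γhat)) := by
  obtain ⟨hγhat0, hγhateq, hγhatuniq⟩ := hγhat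
  -- positivity of c
  have hν : 0 < nuFactor βbar := by
    unfold nuFactor
    split_ifs with hb
    · nlinarith
    · have h3 : 0 < 3 * βbar := by linarith
      exact div_pos two_pos h3
  have hK' : (2:ℝ) ≤ (K:ℝ) := by exact_mod_cast hK
  have hN' : (1:ℝ) ≤ (N:ℝ) := by exact_mod_cast hN
  have hcpos : 0 < c := by
    rw [hc]; apply div_pos <;> linarith
  have hcne : c ≠ 0 := ne_of_gt hcpos
  have h1cpos : 0 < 1 / c := by positivity
  have hγhatlt : γhat < 1 / c := by
    rw [lt_div_iff₀ hcpos]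
    have := (lt_div_iff₀ hγhat0).mp hcγhat
    linarith
  have hdivc : ∀ x : ℝ, x / (1 / c) = c * x := by
    intro x; rw [div_div_eq_mul_div, div_one, mul_comm]
  obtain ⟨h0mem, h0eq, h0uniq⟩ := hγstar (1/c) h1cpos
  rw [hdivc] at h0eq
  -- the "no crossing" fact
  have hnc := no_cross f hf hf0 hf'pos hmono γstar hγstar γhat ⟨hγhat0, hγhateq, hγhatuniq⟩
  have hhat : f γhat / deriv f γhat = γhat := by
    rw [div_eq_iff (ne_of_gt (hf'pos γhat hγhat0))]
    linarith [hγhateq]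
  -- every γstar Γ' lies strictly below γhat
  have hltA : ∀ Γ' : ℝ, 0 < Γ' → γstar Γ' < γhat := by
    intro Γ' hΓ'
    obtain ⟨hmem, heq, _⟩ := hγstar Γ' hΓ'
    by_contra hle
    push_neg at hle
    have hkey : f (γstar Γ') / deriv f (γstar Γ') = γstar Γ' * (1 - γstar Γ' / Γ') := by
      rw [div_eq_iff (ne_of_gt (hf'pos _ hmem.1)), ← heq]; ring
    have hpos : 0 < γstar Γ' / Γ' := div_pos hmem.1 hΓ'
    have hsmall : γstar Γ' * (1 - γstar Γ' / Γ') < γstar Γ' := by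
      nlinarith [hmem.1]
    rcases eq_or_lt_of_le hle with he | hlt'
    · rw [← he] at hkey hsmall
      rw [hhat] at hkey
      linarith
    · have := hnc (γstar Γ') hlt'
      rw [hkey] at this
      linarith
  refine ⟨fun g hg c' σ' _ hσ' γ0 hγ0 => aux_deriv_iff g hg c' σ' hσ' γ0 hγ0.1,
    h0mem, h0eq, ?_, ?_⟩
  · intro γ hγ heq
    apply h0uniq γ hγ
    rw [hdivc]
    exact heq
  intro Γ hΓge
  have hΓpos : 0 < Γ := lt_of_lt_of_le h1cpos hΓge
  obtain ⟨hΓmem, hΓeq, hΓuniq⟩ := hγstar Γ hΓpos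
  refine ⟨?_, (hltA Γ hΓpos).le⟩
  -- show γstar (1/c) ≤ γstar Γ
  by_contra hlt
  push_neg at hlt
  have hγ₀0 : 0 < γstar (1/c) := h0mem.1
  have hγ₀hat : γstar (1/c) < γhat := hltA (1/c) h1cpos
  have hγ₀Γ : γstar (1/c) < Γ := lt_of_lt_of_le h0mem.2 hΓge
  have h1Γc : 1 / Γ ≤ c := by
    rw [div_le_iff₀ hΓpos]
    have := (div_le_iff₀ hcpos).mp hΓge
    linarith
  have hψcont : ContinuousOn (fun γ => f γ / deriv f γ - γ * (1 - γ / Γ)) (Set.Ioi 0) := by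
    apply ContinuousOn.sub
    · exact hf.continuous.continuousOn.div ((hf.continuous_deriv le_rfl).continuousOn)
        (fun x hx => ne_of_gt (hf'pos x hx))
    · exact (continuous_id.mul (continuous_const.sub (continuous_id.div_const Γ))).continuousOn
  have hkey : ∀ z : ℝ, z ∈ Set.Ioo 0 Γ →
      f z / deriv f z - z * (1 - z / Γ) = 0 → z = γstar Γ := by
    intro z hzmem hzeq
    apply hΓuniq z hzmem
    have hz' : f z / deriv f z = z * (1 - z / Γ) := by linarith
    rw [div_eq_iff (ne_of_gt (hf'pos z hzmem.1))] at hz'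
    rw [hz']; ring
  have hψ0 : f (γstar (1/c)) / deriv f (γstar (1/c))
      - γstar (1/c) * (1 - γstar (1/c) / Γ) < 0 := by
    have hk0 : f (γstar (1/c)) / deriv f (γstar (1/c))
        = γstar (1/c) * (1 - c * γstar (1/c)) := by
      rw [div_eq_iff (ne_of_gt (hf'pos _ hγ₀0)), ← h0eq]; ring
    rw [hk0]
    have hval : γstar (1/c) * (1 - c * γstar (1/c))
        - γstar (1/c) * (1 - γstar (1/c) / Γ) = γstar (1/c) ^ 2 * (1 / Γ - c) := by
      field_simp
      ring
    rcases lt_or_eq_of_le h1Γc with hlt' | he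
    · nlinarith [sq_nonneg (γstar (1/c)), mul_pos (mul_pos hγ₀0 hγ₀0) (sub_pos.mpr hlt')]
    · exfalso
      have hz0 : f (γstar (1/c)) / deriv f (γstar (1/c))
          - γstar (1/c) * (1 - γstar (1/c) / Γ) = 0 := by
        rw [hk0, hval, he]; ring
      have := hkey (γstar (1/c)) ⟨hγ₀0, hγ₀Γ⟩ hz0
      rw [← this] at hlt
      exact lt_irrefl _ hlt
  have hψhatpos : 0 < f γhat / deriv f γhat - γhat * (1 - γhat / Γ) := by
    rw [hhat]
    have e : γhat * (1 - γhat / Γ) = γhat - γhat ^ 2 / Γ := by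
      field_simp
    rw [e]
    have : 0 < γhat ^ 2 / Γ := by positivity
    linarith
  have hIVT : (0:ℝ) ∈ (fun γ => f γ / deriv f γ - γ * (1 - γ / Γ)) ''
      Set.Ioo (γstar (1/c)) γhat := by
    apply intermediate_value_Ioo hγ₀hat.le
      (hψcont.mono (fun x hx => lt_of_lt_of_le hγ₀0 hx.1))
    exact ⟨hψ0, hψhatpos⟩
  obtain ⟨z, hzmem, hz⟩ := hIVT
  have hz0 : 0 < z := lt_trans hγ₀0 hzmem.1
  have hzΓ : z < Γ := by
    have h1 : z < γhat := hzmem.2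
    have h2 : γhat < Γ := lt_of_lt_of_le hγhatlt hΓge
    linarith
  have hzeq := hkey z ⟨hz0, hzΓ⟩ hz
  rw [hzeq] at hzmem
  exact lt_irrefl _ (lt_trans hlt hzmem.1)
end
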